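/- arXiv:2110.08138 — 10 statements merged into one kernel-verified Lean document; each statement's English description precedes it below -/
import Mathlib

section
/- Let a ∈ (0, π/2] and let f : (-a, a) → ℝ be a smooth function satisfying f(t)² + f'(t)² ≤ 1 for all t, f(0) = 1, and f'(0) = 0. Then for all t ∈ (-a, a), f(t) ≥ cos t and |f'(t)| ≤ |sin t|. -/
open Real Set

lemma key_half (b : ℝ) (f f' : ℝ → ℝ) (hb0 : 0 ≤ b) (hb : b < Real.pi / 2)
    (hd : ∀ t ∈ Set.Icc (0:ℝ) b, HasDerivAt f (f' t) t)
    (hineq : ∀ t ∈ Set.Icc (0:ℝ) b, f t ^ 2 + f' t ^ 2 ≤ 1)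
    (h0 : f 0 = 1) : Real.cos b ≤ f b := by
  by_contra hcon
  push_neg at hcon
  have hpi := Real.pi_pos
  have hfc : ContinuousOn f (Icc 0 b) := fun t ht => (hd t ht).continuousAt.continuousWithinAt
  have hfle : ∀ t ∈ Icc (0:ℝ) b, -1 ≤ f t ∧ f t ≤ 1 := by
    intro t ht
    have h1 := hineq t ht
    constructor <;> nlinarith [sq_nonneg (f' t)]
  -- the set S
  set S := {t ∈ Icc (0:ℝ) b | Real.cos t ≤ f t} with hSdef
  have hS0 : (0:ℝ) ∈ S := ⟨⟨le_refl 0, hb0⟩, by simp [h0]⟩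
  have hScl : IsClosed S := by
    have := ContinuousOn.preimage_isClosed_of_isClosed
      ((Real.continuous_cos.continuousOn.sub hfc)) isClosed_Icc (isClosed_Iic (a := (0:ℝ)))
    convert this using 1
    ext t; simp [hSdef, sub_nonpos, and_comm]
  have hScpt : IsCompact S := isCompact_Icc.of_isClosed_subset hScl fun t ht => ht.1
  set t1 := sSup S with ht1def
  have ht1S : t1 ∈ S := hScpt.sSup_mem ⟨0, hS0⟩
  have ht10 : 0 ≤ t1 := ht1S.1.1
  have ht1b : t1 ≤ b := ht1S.1.2
  have ht1lt : t1 < b := by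
    rcases lt_or_eq_of_le ht1b with h | h
    · exact h
    · exact absurd (h ▸ ht1S.2) (not_le.2 hcon)
  have hfb' : ∀ t, t1 < t → t ≤ b → f t < Real.cos t := by
    intro t h1 h2
    by_contra hc
    push_neg at hc
    have : t ∈ S := ⟨⟨le_trans ht10 h1.le, h2⟩, hc⟩
    exact absurd (le_csSup hScpt.bddAbove this) (not_le.2 h1)
  -- the set T'
  set T := {t ∈ Icc t1 b | f t ≤ -1} ∪ {b} with hTdef
  have hTcl : IsClosed T := by
    apply IsClosed.union _ isClosed_singleton
    have := ContinuousOn.preimage_isClosed_of_isClosed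
      ((hfc.mono (Icc_subset_Icc ht10 le_rfl))) isClosed_Icc (isClosed_Iic (a := (-1:ℝ)))
    convert this using 1
    rfl
  have hTsub : T ⊆ Icc t1 b := by
    intro t ht
    rcases ht with h | h
    · exact h.1
    · simp at h; subst h; exact ⟨ht1b, le_rfl⟩
  have hTcpt : IsCompact T := isCompact_Icc.of_isClosed_subset hTcl hTsub
  set t2 := sInf T with ht2def
  have ht2T : t2 ∈ T := hTcpt.sInf_mem ⟨b, Or.inr rfl⟩
  have ht21 : t1 ≤ t2 := (hTsub ht2T).1
  have ht2b : t2 ≤ b := (hTsub ht2T).2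
  have hcost1 : 0 < Real.cos t1 :=
    Real.cos_pos_of_mem_Ioo ⟨by linarith, by linarith⟩
  have ht1T : t1 ∉ T := by
    intro h
    rcases h with h | h
    · have := ht1S.2; linarith [h.2]
    · simp at h; exact absurd h (ne_of_lt ht1lt)
  have ht12 : t1 < t2 := lt_of_le_of_ne ht21 (fun h => ht1T (h ▸ ht2T))
  -- on Ioo t1 t2, f is strictly between -1 and cos t
  have hmid : ∀ t ∈ Ioo t1 t2, -1 < f t ∧ f t < Real.cos t := by
    intro t ht
    refine ⟨?_, hfb' t ht.1 (ht.2.le.trans ht2b)⟩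
    by_contra hc
    push_neg at hc
    have : t ∈ T := Or.inl ⟨⟨ht.1.le, ht.2.le.trans ht2b⟩, hc⟩
    exact absurd (csInf_le hTcpt.bddBelow this) (not_le.2 ht.2)
  -- the antitone function
  set g := fun t => Real.arccos (f t) - t with hgdef
  have hganti : AntitoneOn g (Icc t1 t2) := by
    apply antitoneOn_of_deriv_nonpos (convex_Icc t1 t2)
    · exact (Real.continuous_arccos.comp_continuousOn
        (hfc.mono (Icc_subset_Icc ht10 ht2b))).sub continuousOn_id
    · intro t ht
      rw [interior_Icc] at ht
      obtain ⟨hm1, hm2⟩ := hmid t ht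
      have hne1 : f t ≠ 1 := ne_of_lt (lt_of_lt_of_le hm2 (Real.cos_le_one t))
      have hdg : HasDerivAt g (-(1 / Real.sqrt (1 - f t ^ 2)) * f' t - 1) t := by
        have h1 := (Real.hasDerivAt_arccos (ne_of_gt hm1) hne1).comp t
          (hd t ⟨le_trans ht10 ht.1.le, ht.2.le.trans ht2b⟩)
        exact h1.sub (hasDerivAt_id t)
      exact (hdg.differentiableAt).differentiableWithinAt
    · intro t ht
      rw [interior_Icc] at ht
      obtain ⟨hm1, hm2⟩ := hmid t ht
      have hne1 : f t ≠ 1 := ne_of_lt (lt_of_lt_of_le hm2 (Real.cos_le_one t))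
      have htI : t ∈ Icc (0:ℝ) b := ⟨le_trans ht10 ht.1.le, ht.2.le.trans ht2b⟩
      have hdg : HasDerivAt g (-(1 / Real.sqrt (1 - f t ^ 2)) * f' t - 1) t := by
        have h1 := (Real.hasDerivAt_arccos (ne_of_gt hm1) hne1).comp t (hd t htI)
        exact h1.sub (hasDerivAt_id t)
      rw [hdg.deriv]
      have hsq : 0 < 1 - f t ^ 2 := by nlinarith [Real.cos_le_one t]
      have hs : 0 < Real.sqrt (1 - f t ^ 2) := Real.sqrt_pos.2 hsq
      have hf'le : -f' t ≤ Real.sqrt (1 - f t ^ 2) := by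
        have h1 : f' t ^ 2 ≤ 1 - f t ^ 2 := by linarith [hineq t htI]
        have h2 : -f' t ≤ |f' t| := neg_le_abs _
        have h3 : |f' t| = Real.sqrt (f' t ^ 2) := (Real.sqrt_sq_eq_abs _).symm
        have h4 : Real.sqrt (f' t ^ 2) ≤ Real.sqrt (1 - f t ^ 2) := Real.sqrt_le_sqrt h1
        linarith
      have heq : -(1 / Real.sqrt (1 - f t ^ 2)) * f' t = -f' t / Real.sqrt (1 - f t ^ 2) := by
        ring
      rw [sub_nonpos, heq, div_le_one hs]
      exact hf'le
  -- conclude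
  have hg1 : g t1 ≤ 0 := by
    have hb1 : -1 ≤ f t1 := (hfle t1 ⟨ht10, ht1b⟩).1
    have hb2 : f t1 ≤ 1 := (hfle t1 ⟨ht10, ht1b⟩).2
    have : Real.arccos (f t1) ≤ Real.arccos (Real.cos t1) := by
      rcases eq_or_lt_of_le ht1S.2 with h | h
      · rw [h]
      · exact le_of_lt (Real.strictAntiOn_arccos ⟨Real.neg_one_le_cos t1, Real.cos_le_one t1⟩
          ⟨hb1, hb2⟩ h)
    rw [Real.arccos_cos ht10 (by linarith)] at this
    simpa [hgdef] using this
  have hg2 : g t2 ≤ 0 := le_trans (hganti ⟨le_rfl, ht12.le⟩ ⟨ht12.le, le_rfl⟩ ht12.le) hg1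
  have harc : Real.arccos (f t2) ≤ t2 := by simpa [hgdef, sub_nonpos] using hg2
  have hb1 : -1 ≤ f t2 := (hfle t2 ⟨le_trans ht10 ht21, ht2b⟩).1
  have hb2 : f t2 ≤ 1 := (hfle t2 ⟨le_trans ht10 ht21, ht2b⟩).2
  have hcos2 : Real.cos t2 ≤ f t2 := by
    have := Real.cos_le_cos_of_nonneg_of_le_pi (Real.arccos_nonneg _) (by linarith)
      harc
    rwa [Real.cos_arccos hb1 hb2] at this
  rcases ht2T with h | h
  · have : 0 < Real.cos t2 := Real.cos_pos_of_mem_Ioo ⟨by linarith [le_trans ht10 ht21], by linarith⟩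
    linarith [h.2]
  · simp at h
    rw [h] at hcos2
    linarith

/-- **Differential inequality lemma.**
If `a ∈ (0, π/2]` and `f : (-a, a) → ℝ` is smooth with `f(t)² + f'(t)² ≤ 1`,
`f(0) = 1` and `f'(0) = 0`, then `f(t) ≥ cos t` and `|f'(t)| ≤ |sin t|` on `(-a, a)`. -/
theorem stmt0 (a : ℝ) (f : ℝ → ℝ) (ha0 : 0 < a) (ha : a ≤ Real.pi / 2)
    (hf : ContDiffOn ℝ (⊤ : ℕ∞) f (Set.Ioo (-a) a))
    (hineq : ∀ t ∈ Set.Ioo (-a) a, (f t) ^ 2 + (deriv f t) ^ 2 ≤ 1)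
    (h0 : f 0 = 1) (h0' : deriv f 0 = 0) :
    ∀ t ∈ Set.Ioo (-a) a, Real.cos t ≤ f t ∧ |deriv f t| ≤ |Real.sin t| := by
  have hdiff : ∀ t ∈ Set.Ioo (-a) a, HasDerivAt f (deriv f t) t := by
    intro t ht
    exact ((hf.differentiableOn (by simp)).differentiableAt (isOpen_Ioo.mem_nhds ht)).hasDerivAt
  have hmain : ∀ t ∈ Set.Ioo (-a) a, Real.cos t ≤ f t := by
    intro t ht
    obtain ⟨ht1, ht2⟩ := ht
    rcases le_or_gt 0 t with h | h
    · apply key_half t f (deriv f) h (lt_of_lt_of_le ht2 ha)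
      · intro s hs
        exact hdiff s ⟨by linarith [hs.1], by linarith [hs.2]⟩
      · intro s hs
        exact hineq s ⟨by linarith [hs.1], by linarith [hs.2]⟩
      · exact h0
    · have hmem : ∀ s ∈ Set.Icc (0:ℝ) (-t), -s ∈ Set.Ioo (-a) a := by
        intro s hs
        exact ⟨by linarith [hs.2], by linarith [hs.1]⟩
      have key := key_half (-t) (fun s => f (-s)) (fun s => deriv f (-s) * (-1))
        (by linarith) (by linarith [lt_of_lt_of_le (show -t < a by linarith) ha]) ?_ ?_ (by simpa using h0)
      · simpa using key
      · intro s hs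
        exact HasDerivAt.comp s (hdiff (-s) (hmem s hs)) (hasDerivAt_neg s)
      · intro s hs
        have := hineq (-s) (hmem s hs)
        simpa [mul_pow] using this
  intro t ht
  refine ⟨hmain t ht, ?_⟩
  have h1 := hmain t ht
  have hcos : 0 ≤ Real.cos t := le_of_lt (Real.cos_pos_of_mem_Ioo ⟨by linarith [ht.1], by linarith [ht.2]⟩)
  have h2 := hineq t ht
  have h3 : (deriv f t) ^ 2 ≤ Real.sin t ^ 2 := by
    have := Real.sin_sq_add_cos_sq t
    nlinarith
  nlinarith [sq_abs (deriv f t), sq_abs (Real.sin t), abs_nonneg (deriv f t), abs_nonneg (Real.sin t)]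
end

section
/- Let γ : [0, l] → ℝ^d be a smooth curve parametrized by unit speed (‖γ'(t)‖ = 1 for all t) such that γ'(t) is orthogonal to γ''(t) for all t, and suppose ∫₀^l ‖γ''(t)‖ dt ≤ S for some constant S > 0. Then ‖γ(l) − γ(0)‖ ≥ (1 − S²/2) l. -/
open MeasureTheory

/-- **Chord–arc bound I.**
If `γ : [0, l] → ℝ^d` is a smooth unit-speed curve with `γ' ⊥ γ''` and total curvature
`∫₀^l ‖γ''‖ ≤ S`, then `‖γ(l) − γ(0)‖ ≥ (1 − S²/2) l`. -/
theorem stmt1 (d : ℕ) (l S : ℝ) (hl : 0 ≤ l) (hS : 0 < S)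
    (γ : ℝ → EuclideanSpace ℝ (Fin d)) (hγ : ContDiff ℝ (⊤ : ℕ∞) γ)
    (hunit : ∀ t ∈ Set.Icc 0 l, ‖deriv γ t‖ = 1)
    (horth : ∀ t ∈ Set.Icc 0 l, (inner ℝ (deriv γ t) (deriv (deriv γ) t) : ℝ) = 0)
    (hcurv : (∫ t in (0:ℝ)..l, ‖deriv (deriv γ) t‖) ≤ S) :
    (1 - S ^ 2 / 2) * l ≤ ‖γ l - γ 0‖ := by
  have hgam : ContDiff ℝ (⊤ : ℕ∞) γ := hγ.of_le (by simp)
  have hd1 : ContDiff ℝ (⊤ : ℕ∞) (deriv γ) := (contDiff_infty_iff_deriv.mp hgam).2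
  have hd2 : ContDiff ℝ (⊤ : ℕ∞) (deriv (deriv γ)) := (contDiff_infty_iff_deriv.mp hd1).2
  have hc1 : Continuous (deriv γ) := hd1.continuous
  have hc2 : Continuous (deriv (deriv γ)) := hd2.continuous
  set v := deriv γ 0 with hv
  have hvnorm : ‖v‖ = 1 := hunit 0 ⟨le_rfl, hl⟩
  -- ‖γ'(t) - v‖ ≤ S on [0, l]
  have key : ∀ t ∈ Set.Icc (0:ℝ) l, ‖deriv γ t - v‖ ≤ S := by
    intro t ht
    have heq : deriv γ t - v = ∫ s in (0:ℝ)..t, deriv (deriv γ) s :=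
      (intervalIntegral.integral_deriv_eq_sub
        (fun s _ => (hd1.differentiable (by norm_num) s))
        (hc2.intervalIntegrable _ _)).symm
    rw [heq]
    calc ‖∫ s in (0:ℝ)..t, deriv (deriv γ) s‖
        ≤ ∫ s in (0:ℝ)..t, ‖deriv (deriv γ) s‖ :=
          intervalIntegral.norm_integral_le_integral_norm ht.1
      _ ≤ ∫ s in (0:ℝ)..l, ‖deriv (deriv γ) s‖ := by
          apply intervalIntegral.integral_mono_interval le_rfl ht.1 ht.2
          · filter_upwards with s using norm_nonneg _
          · exact (hc2.norm).intervalIntegrable _ _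
      _ ≤ S := hcurv
  -- pointwise inner bound
  have hinner : ∀ t ∈ Set.Icc (0:ℝ) l, 1 - S ^ 2 / 2 ≤ (inner ℝ (deriv γ t) v : ℝ) := by
    intro t ht
    have h1 : ‖deriv γ t‖ = 1 := hunit t ht
    have h2 := norm_sub_sq_real (deriv γ t) v
    have h3 : ‖deriv γ t - v‖ ≤ S := key t ht
    have h4 : (0:ℝ) ≤ ‖deriv γ t - v‖ := norm_nonneg _
    nlinarith [h2, h3, h4]
  -- chord as integral
  have hchord : γ l - γ 0 = ∫ t in (0:ℝ)..l, deriv γ t :=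
    (intervalIntegral.integral_deriv_eq_sub
      (fun s _ => (hgam.differentiable (by norm_num) s))
      (hc1.intervalIntegrable _ _)).symm
  have hL : (inner ℝ (γ l - γ 0) v : ℝ) = ∫ t in (0:ℝ)..l, (inner ℝ (deriv γ t) v : ℝ) := by
    rw [hchord]
    have hii : IntervalIntegrable (deriv γ) MeasureTheory.volume 0 l := hc1.intervalIntegrable 0 l
    have := ((innerSL ℝ).flip v).intervalIntegral_comp_comm hii
    exact this.symm
  have hlow : (1 - S ^ 2 / 2) * l ≤ (inner ℝ (γ l - γ 0) v : ℝ) := by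
    rw [hL]
    have : ∫ t in (0:ℝ)..l, (1 - S ^ 2 / 2) ≤ ∫ t in (0:ℝ)..l, (inner ℝ (deriv γ t) v : ℝ) := by
      apply intervalIntegral.integral_mono_on hl
      · exact intervalIntegrable_const
      · exact ((hc1.inner continuous_const).intervalIntegrable 0 l)
      · exact hinner
    rw [intervalIntegral.integral_const, smul_eq_mul, sub_zero] at this
    rw [mul_comm]
    exact this
  calc (1 - S ^ 2 / 2) * l ≤ (inner ℝ (γ l - γ 0) v : ℝ) := hlow
    _ ≤ ‖γ l - γ 0‖ * ‖v‖ := real_inner_le_norm _ _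
    _ = ‖γ l - γ 0‖ := by rw [hvnorm, mul_one]
end

section
/- Let γ : [0, l] → ℝ^d be a smooth unit-speed curve with ∫₀^l ‖γ''(t)‖ dt ≤ S. Then ‖γ(l) − γ(0)‖ ≥ (1 − S/√2) l. -/
open MeasureTheory

/-- **Chord–arc bound II.**
If `γ : [0, l] → ℝ^d` is a smooth unit-speed curve with total curvature
`∫₀^l ‖γ''‖ ≤ S`, then `‖γ(l) − γ(0)‖ ≥ (1 − S/√2) l`. -/
theorem stmt2 (d : ℕ) (l S : ℝ) (hl : 0 ≤ l) (hS : 0 < S)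
    (γ : ℝ → EuclideanSpace ℝ (Fin d)) (hγ : ContDiff ℝ (⊤ : ℕ∞) γ)
    (hunit : ∀ t ∈ Set.Icc 0 l, ‖deriv γ t‖ = 1)
    (hcurv : (∫ t in (0:ℝ)..l, ‖deriv (deriv γ) t‖) ≤ S) :
    (1 - S / Real.sqrt 2) * l ≤ ‖γ l - γ 0‖ := by
  have hs2 : (0:ℝ) < Real.sqrt 2 := Real.sqrt_pos.mpr (by norm_num)
  have hsq2 : (Real.sqrt 2) ^ 2 = 2 := Real.sq_sqrt (by norm_num)
  rcases le_or_gt (Real.sqrt 2) S with hS2 | hS2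
  · have h1 : 1 - S / Real.sqrt 2 ≤ 0 := by
      rw [sub_nonpos, le_div_iff₀ hs2]
      linarith
    calc (1 - S / Real.sqrt 2) * l ≤ 0 := mul_nonpos_of_nonpos_of_nonneg h1 hl
      _ ≤ ‖γ l - γ 0‖ := norm_nonneg _
  · have hγ' : ContDiff ℝ (⊤ : ℕ∞) γ := hγ.of_le (by simp)
    have hγ1 : ContDiff ℝ (⊤ : ℕ∞) (deriv γ) := (contDiff_infty_iff_deriv.mp hγ').2
    have hd : Differentiable ℝ γ := hγ'.differentiable (by norm_num)
    have hd1 : Differentiable ℝ (deriv γ) := hγ1.differentiable (by norm_num)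
    have hc2 : Continuous (deriv (deriv γ)) := (contDiff_infty_iff_deriv.mp hγ1).2.continuous
    have h0mem : (0:ℝ) ∈ Set.Icc (0:ℝ) l := ⟨le_rfl, hl⟩
    have key : ∀ t ∈ Set.Icc (0:ℝ) l, ‖deriv γ t - deriv γ 0‖ ≤ S := by
      intro t ht
      have hft : deriv γ t - deriv γ 0 = ∫ s in (0:ℝ)..t, deriv (deriv γ) s :=
        (intervalIntegral.integral_deriv_eq_sub (fun x _ => hd1 x)
          (hc2.intervalIntegrable _ _)).symm
      rw [hft]
      calc ‖∫ s in (0:ℝ)..t, deriv (deriv γ) s‖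
          ≤ ∫ s in (0:ℝ)..t, ‖deriv (deriv γ) s‖ :=
            intervalIntegral.norm_integral_le_integral_norm ht.1
        _ ≤ ∫ s in (0:ℝ)..l, ‖deriv (deriv γ) s‖ := by
            rw [← intervalIntegral.integral_add_adjacent_intervals
              (a := (0:ℝ)) (b := t) (c := l)
              ((hc2.norm).intervalIntegrable _ _) ((hc2.norm).intervalIntegrable _ _)]
            have hnn : 0 ≤ ∫ s in t..l, ‖deriv (deriv γ) s‖ :=
              intervalIntegral.integral_nonneg ht.2 fun _ _ => norm_nonneg _
            linarith
        _ ≤ S := hcurv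
    have hinner : ∀ t ∈ Set.Icc (0:ℝ) l,
        1 - S ^ 2 / 2 ≤ inner ℝ (deriv γ 0) (deriv γ t) := by
      intro t ht
      have h1 := hunit t ht
      have h0 := hunit 0 h0mem
      have hsq : ‖deriv γ t - deriv γ 0‖ ^ 2 ≤ S ^ 2 := by
        have hk := key t ht
        nlinarith [norm_nonneg (deriv γ t - deriv γ 0)]
      have hns := @norm_sub_sq_real (EuclideanSpace ℝ (Fin d)) _ _ (deriv γ t) (deriv γ 0)
      rw [real_inner_comm]
      nlinarith [hns]
    have hft : γ l - γ 0 = ∫ t in (0:ℝ)..l, deriv γ t :=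
      (intervalIntegral.integral_deriv_eq_sub (fun x _ => hd x)
        (hγ1.continuous.intervalIntegrable _ _)).symm
    have hintg : IntervalIntegrable (deriv γ) volume 0 l :=
      hγ1.continuous.intervalIntegrable _ _
    have hcomm :
        (∫ t in (0:ℝ)..l, inner ℝ (deriv γ 0) (deriv γ t) : ℝ)
          = inner ℝ (deriv γ 0) (∫ t in (0:ℝ)..l, deriv γ t) := by
      have := (innerSL ℝ (deriv γ 0)).intervalIntegral_comp_comm hintg
      simpa using this
    have hlow : (1 - S ^ 2 / 2) * l ≤ inner ℝ (deriv γ 0) (γ l - γ 0) := by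
      rw [hft, ← hcomm]
      have hmono : (∫ t in (0:ℝ)..l, (1 - S ^ 2 / 2))
          ≤ ∫ t in (0:ℝ)..l, (inner ℝ (deriv γ 0) (deriv γ t) : ℝ) := by
        apply intervalIntegral.integral_mono_on hl intervalIntegrable_const
          ((continuous_const.inner hγ1.continuous).intervalIntegrable _ _)
        intro t ht
        exact hinner t ht
      rw [intervalIntegral.integral_const, smul_eq_mul, sub_zero] at hmono
      linarith [hmono]
    have hcs : (inner ℝ (deriv γ 0) (γ l - γ 0) : ℝ) ≤ ‖γ l - γ 0‖ := by
      have h := real_inner_le_norm (deriv γ 0) (γ l - γ 0)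
      rw [hunit 0 h0mem, one_mul] at h
      exact h
    have hcmp : (1 - S / Real.sqrt 2) * l ≤ (1 - S ^ 2 / 2) * l := by
      apply mul_le_mul_of_nonneg_right _ hl
      rw [sub_le_sub_iff_left, div_le_div_iff₀ two_pos hs2]
      nlinarith
    linarith
end

section
/- Let γ : [0, l] → ℝ^d be a smooth unit-speed curve with ∫₀^l ‖γ''(t)‖ dt ≤ S, and suppose in addition that l ≤ L·‖γ(l) − γ(0)‖ + τ for some constants L ≥ 1 and τ > 0. Then l ≤ (1 + C_L · S)·‖γ(l) − γ(0)‖ + τ, where C_L := (L(L−1)/2)^{1/2}. -/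
open MeasureTheory

lemma chord_arc_aux (d : ℕ) (l S : ℝ) (hl : 0 ≤ l) (hS : 0 < S)
    (γ : ℝ → EuclideanSpace ℝ (Fin d)) (hγ : ContDiff ℝ (⊤ : ℕ∞) γ)
    (hunit : ∀ t ∈ Set.Icc 0 l, ‖deriv γ t‖ = 1)
    (hcurv : (∫ t in (0:ℝ)..l, ‖deriv (deriv γ) t‖) ≤ S) :
    (1 - S ^ 2 / 2) * l ≤ ‖γ l - γ 0‖ := by
  have hd1 : Differentiable ℝ γ := hγ.differentiable (by simp)
  have hγ' : ContDiff ℝ ((⊤ : ℕ∞) : WithTop ℕ∞) (deriv γ) := (contDiff_infty_iff_deriv.mp (hγ.of_le (by simp))).2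
  have hd2 : Differentiable ℝ (deriv γ) := hγ'.differentiable (by simp)
  have hc1 : Continuous (deriv γ) := hd2.continuous
  have hc2 : Continuous (deriv (deriv γ)) := hγ'.continuous_deriv (by exact_mod_cast le_top)
  set v := deriv γ 0 with hv
  have hvnorm : ‖v‖ = 1 := hunit 0 ⟨le_refl _, hl⟩
  -- pointwise bound on inner product
  have key : ∀ t ∈ Set.Icc (0:ℝ) l, 1 - S ^ 2 / 2 ≤ inner ℝ v (deriv γ t) := by
    intro t ht
    have hdiff : deriv γ t - v = ∫ s in (0:ℝ)..t, deriv (deriv γ) s := by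
      rw [intervalIntegral.integral_deriv_eq_sub (fun s _ => hd2 s) (hc2.intervalIntegrable 0 t)]
    have hbound : ‖deriv γ t - v‖ ≤ S := by
      rw [hdiff]
      calc ‖∫ s in (0:ℝ)..t, deriv (deriv γ) s‖
          ≤ ∫ s in (0:ℝ)..t, ‖deriv (deriv γ) s‖ :=
            intervalIntegral.norm_integral_le_integral_norm ht.1
        _ ≤ ∫ s in (0:ℝ)..l, ‖deriv (deriv γ) s‖ := by
            rw [← intervalIntegral.integral_add_adjacent_intervals
              (hc2.norm.intervalIntegrable 0 t) (hc2.norm.intervalIntegrable t l)]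
            have : 0 ≤ ∫ s in t..l, ‖deriv (deriv γ) s‖ :=
              intervalIntegral.integral_nonneg ht.2 (fun _ _ => norm_nonneg _)
            linarith
        _ ≤ S := hcurv
    have hn : ‖deriv γ t‖ = 1 := hunit t ht
    have hsq : ‖v - deriv γ t‖ ^ 2 = ‖v‖ ^ 2 - 2 * inner ℝ v (deriv γ t) + ‖deriv γ t‖ ^ 2 :=
      norm_sub_sq_real v (deriv γ t)
    have hswap : ‖v - deriv γ t‖ = ‖deriv γ t - v‖ := norm_sub_rev _ _
    have h2 : ‖deriv γ t - v‖ ^ 2 ≤ S ^ 2 := by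
      have := norm_nonneg (deriv γ t - v)
      nlinarith
    rw [hswap] at hsq
    rw [hvnorm, hn] at hsq
    nlinarith
  -- integrate
  have hsub : γ l - γ 0 = ∫ t in (0:ℝ)..l, deriv γ t := by
    rw [intervalIntegral.integral_deriv_eq_sub (fun s _ => hd1 s) (hc1.intervalIntegrable 0 l)]
  have hinner : inner ℝ v (γ l - γ 0) = ∫ t in (0:ℝ)..l, (inner ℝ v (deriv γ t) : ℝ) := by
    rw [hsub]
    exact ((innerSL ℝ v).intervalIntegral_comp_comm (hc1.intervalIntegrable 0 l)).symm
  have hint : IntervalIntegrable (fun t => (inner ℝ v (deriv γ t) : ℝ)) volume 0 l :=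
    (continuous_const.inner hc1).intervalIntegrable 0 l
  have hmono : (1 - S ^ 2 / 2) * l ≤ ∫ t in (0:ℝ)..l, (inner ℝ v (deriv γ t) : ℝ) := by
    have h0 := intervalIntegral.integral_mono_on (μ := volume) hl
      (intervalIntegrable_const (c := 1 - S ^ 2 / 2)) hint key
    rw [intervalIntegral.integral_const, smul_eq_mul, sub_zero] at h0
    linarith
  have hCS : (inner ℝ v (γ l - γ 0) : ℝ) ≤ ‖γ l - γ 0‖ := by
    calc (inner ℝ v (γ l - γ 0) : ℝ) ≤ ‖v‖ * ‖γ l - γ 0‖ := real_inner_le_norm _ _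
      _ = ‖γ l - γ 0‖ := by rw [hvnorm, one_mul]
  linarith [hmono, hinner ▸ hCS]

/-- **Chord–arc bound III.**
If `γ : [0, l] → ℝ^d` is a smooth unit-speed curve with total curvature
`∫₀^l ‖γ''‖ ≤ S`, and moreover `l ≤ L‖γ(l) − γ(0)‖ + τ` with `L ≥ 1`, `τ > 0`, then
`l ≤ (1 + C_L S)‖γ(l) − γ(0)‖ + τ` where `C_L = √(L(L−1)/2)`. -/
theorem stmt3 (d : ℕ) (l S L τ : ℝ) (hl : 0 ≤ l) (hS : 0 < S) (hL : 1 ≤ L) (hτ : 0 < τ)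
    (γ : ℝ → EuclideanSpace ℝ (Fin d)) (hγ : ContDiff ℝ (⊤ : ℕ∞) γ)
    (hunit : ∀ t ∈ Set.Icc 0 l, ‖deriv γ t‖ = 1)
    (hcurv : (∫ t in (0:ℝ)..l, ‖deriv (deriv γ) t‖) ≤ S)
    (hchord : l ≤ L * ‖γ l - γ 0‖ + τ) :
    l ≤ (1 + Real.sqrt (L * (L - 1) / 2) * S) * ‖γ l - γ 0‖ + τ := by
  set c := ‖γ l - γ 0‖ with hc
  have hcn : 0 ≤ c := norm_nonneg _
  have hCL : 0 ≤ Real.sqrt (L * (L - 1) / 2) := Real.sqrt_nonneg _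
  have hCLsq : Real.sqrt (L * (L - 1) / 2) ^ 2 = L * (L - 1) / 2 := by
    rw [Real.sq_sqrt]; nlinarith
  by_cases hcase : S ^ 2 ≤ 2 * (L - 1) / L
  · -- small curvature case
    have hkey : (1 - S ^ 2 / 2) * l ≤ c := chord_arc_aux d l S hl hS γ hγ hunit hcurv
    have hL0 : (0:ℝ) < L := by linarith
    have hSL : S ^ 2 * L ≤ 2 * (L - 1) := (le_div_iff₀ hL0).mp hcase
    have hS2 : S ^ 2 / 2 ≤ (L - 1) / L := by
      rw [div_le_div_iff₀ (by norm_num) hL0]; linarith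
    have hS2le1 : S ^ 2 / 2 ≤ 1 := by
      have : (L - 1) / L ≤ 1 := by rw [div_le_one hL0]; linarith
      linarith
    -- S^2 * L / 2 ≤ C_L * S
    have hmain : S ^ 2 * L / 2 ≤ Real.sqrt (L * (L - 1) / 2) * S := by
      have h1 : (S ^ 2 * L / 2) ^ 2 ≤ (Real.sqrt (L * (L - 1) / 2) * S) ^ 2 := by
        rw [mul_pow, hCLsq]
        nlinarith [mul_le_mul_of_nonneg_left hSL (by positivity : (0:ℝ) ≤ S ^ 2 * L)]
      have h2 : 0 ≤ S ^ 2 * L / 2 := by positivity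
      have h3 : 0 ≤ Real.sqrt (L * (L - 1) / 2) * S := by positivity
      nlinarith
    -- l ≤ c + (S^2/2) * l ≤ c + (S^2/2)(L c + τ)
    have step : l ≤ c + S ^ 2 / 2 * (L * c + τ) := by
      have h4 : S ^ 2 / 2 * l ≤ S ^ 2 / 2 * (L * c + τ) := by
        apply mul_le_mul_of_nonneg_left hchord (by positivity)
      nlinarith
    have : S ^ 2 / 2 * (L * c + τ) = S ^ 2 * L / 2 * c + S ^ 2 / 2 * τ := by ring
    rw [this] at step
    have h5 : S ^ 2 * L / 2 * c ≤ Real.sqrt (L * (L - 1) / 2) * S * c :=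
      mul_le_mul_of_nonneg_right hmain hcn
    have h6 : S ^ 2 / 2 * τ ≤ τ := by nlinarith
    nlinarith
  · -- large curvature case: 1 + C_L S ≥ L
    push_neg at hcase
    have hLle : L ≤ 1 + Real.sqrt (L * (L - 1) / 2) * S := by
      have h1 : (L - 1) ^ 2 ≤ (Real.sqrt (L * (L - 1) / 2) * S) ^ 2 := by
        rw [mul_pow, hCLsq]
        have hL0 : (0:ℝ) < L := by linarith
        have h0 : 2 * (L - 1) ≤ S ^ 2 * L := le_of_lt ((div_lt_iff₀ hL0).mp hcase)
        nlinarith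
      have h2 : (0:ℝ) ≤ L - 1 := by linarith
      have h3 : 0 ≤ Real.sqrt (L * (L - 1) / 2) * S := by positivity
      nlinarith
    calc l ≤ L * c + τ := hchord
      _ ≤ (1 + Real.sqrt (L * (L - 1) / 2) * S) * c + τ := by
          have := mul_le_mul_of_nonneg_right hLle hcn; linarith
end

section
/- Let (H, ⟨·,·⟩) be a finite-dimensional real inner product space and D : H × H → ℝ a positive semidefinite symmetric bilinear form. Fix λ' ≥ λ > 0 and let P : H → H be the orthogonal projection onto the span of eigenvectors of D with eigenvalues in [0, λ']. Define D̃(u, v) := D(Pu, Pv) + λ⟨(1−P)u, (1−P)v⟩. Then D ≥ D̃ (i.e., D(u,u) ≥ D̃(u,u) for all u ∈ H), and for any subspace L ⊆ H and any j ∈ {1, …, dim L}, the j-th smallest eigenvalue of D̃ restricted to L satisfies λⱼ(D̃|_L) ≥ min{λ, λⱼ(D)}. -/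
/-!
In an orthonormal eigenbasis of `D`, the form `D̃` is again diagonal, with entry `μᵢ` where
`μᵢ ≤ λ'` and entry `λ ≤ λ' < μᵢ` elsewhere; hence `D̃ ≤ D`.

For the eigenvalue bound take `V ≤ L` of dimension `j`. If `P` kills some `v ≠ 0` in `V`, the
Rayleigh quotient of `D̃` at `v` is `λ`. Otherwise `P V` is again `j`-dimensional, and since
`‖v‖² = ‖Pv‖² + ‖v - Pv‖²` the Rayleigh quotient `(D(Pv,Pv) + λ‖v - Pv‖²) / ‖v‖²` of `D̃` at `v`
is a mediant of `D(Pv,Pv)/‖Pv‖²` and `λ`, so it is at least their minimum. Taking suprema,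
`sup_V D̃ ≥ min(λ, sup_{PV} D) ≥ min(λ, λⱼ(D))`.
-/

open Finset

noncomputable def rayleighSup {E : Type*} [NormedAddCommGroup E] [InnerProductSpace ℝ E]
    (B : E → E → ℝ) (V : Submodule ℝ E) : ℝ :=
  ⨆ v : {v : E // v ∈ V ∧ v ≠ 0}, B v v / ‖(v : E)‖ ^ 2

/-- The `j`-th smallest eigenvalue (`j` counted from `1`) of a symmetric form `B`
restricted to the subspace `L`, characterized by the minimax principle:
the infimum over `j`-dimensional subspaces `V ⊆ L` of the supremum of the
Rayleigh quotient on `V`. -/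
noncomputable def minimaxEigOn {E : Type*} [NormedAddCommGroup E] [InnerProductSpace ℝ E]
    (B : E → E → ℝ) (L : Submodule ℝ E) (j : ℕ) : ℝ :=
  ⨅ V : {V : Submodule ℝ E // V ≤ L ∧ Module.finrank ℝ V = j}, rayleighSup B V

open scoped RealInnerProductSpace

theorem Submodule.exists_le_finrank_eq {K M : Type*} [DivisionRing K] [AddCommGroup M] [Module K M]
    {L : Submodule K M} {j : ℕ} (hj : j ≤ Module.finrank K L) :
    ∃ V ≤ L, Module.finrank K V = j := by
  obtain ⟨f, hf⟩ := exists_linearIndependent_of_le_finrank hj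
  refine ⟨Submodule.span K (Set.range fun i => (f i : M)), ?_, ?_⟩
  · rw [Submodule.span_le]
    rintro _ ⟨i, rfl⟩
    exact (f i).2
  · exact (finrank_span_eq_card (hf.map' L.subtype L.ker_subtype)).trans (Fintype.card_fin j)

theorem Submodule.finrank_map_of_disjoint_ker {K M N : Type*} [DivisionRing K] [AddCommGroup M]
    [Module K M] [AddCommGroup N] [Module K N] {f : M →ₗ[K] N} {V : Submodule K M}
    (h : Disjoint V (LinearMap.ker f)) : Module.finrank K (V.map f) = Module.finrank K V := by
  rw [← LinearMap.range_domRestrict,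
    LinearMap.finrank_range_of_inj (LinearMap.injective_domRestrict_iff.mpr h)]

theorem LinearMap.exists_apply_self_le_mul_norm_sq {E : Type*} [NormedAddCommGroup E]
    [NormedSpace ℝ E] [FiniteDimensional ℝ E] (D : E →ₗ[ℝ] E →ₗ[ℝ] ℝ) :
    ∃ C, ∀ u, D u u ≤ C * ‖u‖ ^ 2 := by
  let D' : E →L[ℝ] E →L[ℝ] ℝ :=
    LinearMap.toContinuousLinearMap (LinearMap.toContinuousLinearMap.toLinearMap ∘ₗ D)
  refine ⟨‖D'‖, fun u => ?_⟩
  calc D u u ≤ ‖D' u u‖ := Real.le_norm_self _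
    _ ≤ ‖D'‖ * ‖u‖ * ‖u‖ := D'.le_opNorm₂ u u
    _ = ‖D'‖ * ‖u‖ ^ 2 := by ring

theorem min_le_add_div_add (lam : ℝ) {a s t : ℝ} (hs : 0 < s) (ht : 0 ≤ t) :
    min lam (a / s) ≤ (a + lam * t) / (s + t) := by
  have hst : 0 < s + t := by linarith
  rcases le_total lam (a / s) with h | h
  · rw [le_div_iff₀ hs] at h
    rw [min_eq_left (by rwa [le_div_iff₀ hs]), le_div_iff₀ hst]
    linarith
  · rw [div_le_iff₀ hs] at h
    rw [min_eq_right (by rwa [div_le_iff₀ hs]), div_le_div_iff₀ hs hst]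
    nlinarith

section Minimax

variable {E : Type*} [NormedAddCommGroup E] [InnerProductSpace ℝ E] {B : E → E → ℝ}

theorem le_rayleighSup (hB : ∃ C, ∀ u, B u u ≤ C * ‖u‖ ^ 2) {V : Submodule ℝ E} {v : E}
    (hv : v ∈ V) (hv0 : v ≠ 0) : B v v / ‖v‖ ^ 2 ≤ rayleighSup B V := by
  obtain ⟨C, hC⟩ := hB
  refine le_ciSup (f := fun w : {w : E // w ∈ V ∧ w ≠ 0} => B w w / ‖(w : E)‖ ^ 2)
    ⟨C, ?_⟩ ⟨v, hv, hv0⟩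
  rintro _ ⟨w, rfl⟩
  exact (div_le_iff₀ (pow_pos (norm_pos_iff.mpr w.2.2) 2)).mpr (hC w)

theorem exists_lt_of_lt_rayleighSup {V : Submodule ℝ E} (hV : V ≠ ⊥) {z : ℝ}
    (hz : z < rayleighSup B V) : ∃ v ∈ V, v ≠ 0 ∧ z < B v v / ‖v‖ ^ 2 := by
  obtain ⟨v, hv, hv0⟩ := Submodule.exists_mem_ne_zero_of_ne_bot hV
  have : Nonempty {v : E // v ∈ V ∧ v ≠ 0} := ⟨⟨v, hv, hv0⟩⟩
  obtain ⟨⟨w, hw, hw0⟩, hzw⟩ := exists_lt_of_lt_ciSup hz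
  exact ⟨w, hw, hw0, hzw⟩

theorem rayleighSup_nonneg (hB : ∀ u, 0 ≤ B u u) (V : Submodule ℝ E) : 0 ≤ rayleighSup B V :=
  Real.iSup_nonneg fun v => div_nonneg (hB v) (sq_nonneg _)

theorem minimaxEigOn_le_rayleighSup (hB : ∀ u, 0 ≤ B u u) {L V : Submodule ℝ E} {j : ℕ}
    (hVL : V ≤ L) (hVj : Module.finrank ℝ V = j) : minimaxEigOn B L j ≤ rayleighSup B V := by
  have hbdd : BddBelow (Set.range fun W : {W : Submodule ℝ E // W ≤ L ∧ Module.finrank ℝ W = j} =>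
      rayleighSup B W) := ⟨0, by rintro _ ⟨W, rfl⟩; exact rayleighSup_nonneg hB W⟩
  exact ciInf_le hbdd ⟨V, hVL, hVj⟩

theorem le_minimaxEigOn {L : Submodule ℝ E} {j : ℕ} (hj : j ≤ Module.finrank ℝ L) {c : ℝ}
    (h : ∀ V ≤ L, Module.finrank ℝ V = j → c ≤ rayleighSup B V) : c ≤ minimaxEigOn B L j := by
  obtain ⟨V, hVL, hVj⟩ := Submodule.exists_le_finrank_eq hj
  have : Nonempty {V : Submodule ℝ E // V ≤ L ∧ Module.finrank ℝ V = j} := ⟨⟨V, hVL, hVj⟩⟩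
  exact le_ciInf fun V => h V V.2.1 V.2.2

end Minimax

section Truncation

variable {E : Type*} [NormedAddCommGroup E] [InnerProductSpace ℝ E] {B Bt : E → E → ℝ}
  {lam : ℝ}

theorem min_rayleighSup_map_le (hBt_le : ∃ C, ∀ u, Bt u u ≤ C * ‖u‖ ^ 2) {P : E →ₗ[ℝ] E}
    (hpyth : ∀ u, ‖u‖ ^ 2 = ‖P u‖ ^ 2 + ‖u - P u‖ ^ 2)
    (hBt : ∀ u, Bt u u = B (P u) (P u) + lam * ‖u - P u‖ ^ 2)
    {V : Submodule ℝ E} (hV : V.map P ≠ ⊥) :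
    min lam (rayleighSup B (V.map P)) ≤ rayleighSup Bt V := by
  refine le_of_forall_lt fun z hz => ?_
  rw [lt_min_iff] at hz
  obtain ⟨_, hw, hPv, hzw⟩ := exists_lt_of_lt_rayleighSup hV hz.2
  obtain ⟨v, hv, rfl⟩ := Submodule.mem_map.mp hw
  have hv0 : v ≠ 0 := by rintro rfl; exact hPv (map_zero P)
  calc z < min lam (B (P v) (P v) / ‖P v‖ ^ 2) := lt_min hz.1 hzw
    _ ≤ Bt v v / ‖v‖ ^ 2 := by
      rw [hBt, hpyth v]
      exact min_le_add_div_add lam (by positivity) (sq_nonneg _)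
    _ ≤ rayleighSup Bt V := le_rayleighSup hBt_le hv hv0

theorem min_le_minimaxEigOn_of_eq_add_norm_sq (hB : ∀ u, 0 ≤ B u u)
    (hBt_le : ∃ C, ∀ u, Bt u u ≤ C * ‖u‖ ^ 2) (P : E →ₗ[ℝ] E)
    (hpyth : ∀ u, ‖u‖ ^ 2 = ‖P u‖ ^ 2 + ‖u - P u‖ ^ 2)
    (hBt : ∀ u, Bt u u = B (P u) (P u) + lam * ‖u - P u‖ ^ 2)
    {L : Submodule ℝ E} {j : ℕ} (hj1 : 1 ≤ j) (hj : j ≤ Module.finrank ℝ L) :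
    min lam (minimaxEigOn B ⊤ j) ≤ minimaxEigOn Bt L j := by
  refine le_minimaxEigOn hj fun V hVL hVj => ?_
  by_cases hinj : ∀ v ∈ V, P v = 0 → v = 0
  · have hPVj : Module.finrank ℝ (V.map P) = j :=
      (Submodule.finrank_map_of_disjoint_ker (LinearMap.disjoint_ker.mpr hinj)).trans hVj
    have hPV : V.map P ≠ ⊥ := fun h => by rw [h, finrank_bot] at hPVj; omega
    calc min lam (minimaxEigOn B ⊤ j) ≤ min lam (rayleighSup B (V.map P)) :=
          min_le_min_left _ (minimaxEigOn_le_rayleighSup hB le_top hPVj)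
      _ ≤ rayleighSup Bt V := min_rayleighSup_map_le hBt_le hpyth hBt hPV
  · push Not at hinj
    obtain ⟨v, hv, hPv, hv0⟩ := hinj
    calc min lam (minimaxEigOn B ⊤ j) ≤ lam := min_le_left _ _
      _ ≤ Bt v v / ‖v‖ ^ 2 := by
        rw [le_div_iff₀ (by positivity), hBt, hPv, sub_zero]
        linarith [hB 0]
      _ ≤ rayleighSup Bt V := le_rayleighSup hBt_le hv hv0

end Truncation

namespace OrthonormalBasis

variable {E ι : Type*} [NormedAddCommGroup E] [InnerProductSpace ℝ E] [Fintype ι]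
  (b : OrthonormalBasis ι ℝ E)

noncomputable def partialProj (S : Finset ι) : E →ₗ[ℝ] E :=
  ∑ i ∈ S, (innerₛₗ ℝ (b i)).smulRight (b i)

theorem partialProj_apply (S : Finset ι) (u : E) :
    b.partialProj S u = ∑ i ∈ S, ⟪b i, u⟫ • b i := by
  simp [partialProj]

theorem apply_self_eq_sum_of_eigen (D : E →ₗ[ℝ] E →ₗ[ℝ] ℝ) {μ : ι → ℝ}
    (heig : ∀ i v, D (b i) v = μ i * ⟪b i, v⟫) (u : E) :
    D u u = ∑ i, μ i * ⟪b i, u⟫ ^ 2 := by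
  nth_rw 1 [← b.sum_repr' u]
  simp only [map_sum, LinearMap.sum_apply, map_smul, LinearMap.smul_apply, heig, smul_eq_mul]
  exact sum_congr rfl fun i _ => by ring

variable [DecidableEq ι] {S : Finset ι}

theorem inner_partialProj (i : ι) (u : E) :
    ⟪b i, b.partialProj S u⟫ = if i ∈ S then ⟪b i, u⟫ else 0 := by
  simp only [partialProj_apply, inner_sum, inner_smul_right,
    orthonormal_iff_ite.mp b.orthonormal, mul_ite, mul_one, mul_zero, sum_ite_eq]

theorem inner_sub_partialProj (i : ι) (u : E) :
    ⟪b i, u - b.partialProj S u⟫ = if i ∈ S then 0 else ⟪b i, u⟫ := by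
  rw [inner_sub_right, inner_partialProj]
  split_ifs <;> ring

theorem norm_sq_eq_partialProj_add (u : E) :
    ‖u‖ ^ 2 = ‖b.partialProj S u‖ ^ 2 + ‖u - b.partialProj S u‖ ^ 2 := by
  simp only [← b.sum_sq_inner_right, ← sum_add_distrib, inner_partialProj, inner_sub_partialProj]
  exact sum_congr rfl fun i _ => by split_ifs <;> ring

theorem apply_partialProj_add_le_of_eigen (D : E →ₗ[ℝ] E →ₗ[ℝ] ℝ) {μ : ι → ℝ}
    (heig : ∀ i v, D (b i) v = μ i * ⟪b i, v⟫) {lam : ℝ} (hS : ∀ i ∉ S, lam ≤ μ i) (u : E) :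
    D (b.partialProj S u) (b.partialProj S u) + lam * ‖u - b.partialProj S u‖ ^ 2 ≤ D u u := by
  simp only [b.apply_self_eq_sum_of_eigen D heig, ← b.sum_sq_inner_right, mul_sum,
    ← sum_add_distrib, inner_partialProj, inner_sub_partialProj]
  refine sum_le_sum fun i _ => ?_
  split_ifs with hi
  · simp
  · nlinarith [hS i hi, sq_nonneg ⟪b i, u⟫]

end OrthonormalBasis

theorem stmt5_general {E : Type*} [NormedAddCommGroup E] [InnerProductSpace ℝ E]
    [FiniteDimensional ℝ E] {ι : Type*} [Fintype ι]
    (D : E →ₗ[ℝ] E →ₗ[ℝ] ℝ)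
    (hpsd : ∀ u, 0 ≤ D u u)
    (b : OrthonormalBasis ι ℝ E) (μe : ι → ℝ)
    (heig : ∀ i v, D (b i) v = μe i * (inner ℝ (b i) v : ℝ))
    (lam lam' : ℝ) (hlam' : lam ≤ lam')
    (P : E → E)
    (hP : ∀ u, P u = ∑ i ∈ Finset.univ.filter (fun i => μe i ≤ lam'),
      (inner ℝ (b i) u : ℝ) • b i)
    (Dt : E → E → ℝ)
    (hDt : ∀ u v, Dt u v = D (P u) (P v) + lam * (inner ℝ (u - P u) (v - P v) : ℝ)) :
    (∀ u, Dt u u ≤ D u u) ∧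
    ∀ (L : Submodule ℝ E) (j : ℕ), 1 ≤ j → j ≤ Module.finrank ℝ L →
      min lam (minimaxEigOn (fun u v => D u v) (⊤ : Submodule ℝ E) j) ≤
        minimaxEigOn Dt L j := by
  classical
  set S := Finset.univ.filter (fun i => μe i ≤ lam')
  obtain rfl : P = b.partialProj S := funext fun u => by rw [hP, b.partialProj_apply]
  have hDt_self (u : E) : Dt u u = D (b.partialProj S u) (b.partialProj S u) +
      lam * ‖u - b.partialProj S u‖ ^ 2 := by
    rw [hDt, real_inner_self_eq_norm_sq]
  have hS (i : ι) (hi : i ∉ S) : lam ≤ μe i := by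
    simp only [S, mem_filter, mem_univ, true_and, not_le] at hi
    exact hlam'.trans hi.le
  have hDt_le (u : E) : Dt u u ≤ D u u :=
    (hDt_self u).trans_le (b.apply_partialProj_add_le_of_eigen D heig hS u)
  obtain ⟨C, hC⟩ := D.exists_apply_self_le_mul_norm_sq
  exact ⟨hDt_le, fun L j hj1 hj => min_le_minimaxEigOn_of_eq_add_norm_sq hpsd
    ⟨C, fun u => (hDt_le u).trans (hC u)⟩ _ b.norm_sq_eq_partialProj_add hDt_self hj1 hj⟩

/-- **Comparison with the truncated form `D̃`.**
Let `D` be a positive semidefinite symmetric bilinear form on a finite-dimensional real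
inner product space `E`, with orthonormal eigenbasis `b` and eigenvalues `μe`.  For
`0 < λ ≤ λ'`, let `P` be the orthogonal projection onto the span of the eigenvectors with
eigenvalue `≤ λ'`, and let `D̃(u,v) = D(Pu, Pv) + λ⟨(1−P)u, (1−P)v⟩`.  Then `D ≥ D̃`, and
for every subspace `L` and `1 ≤ j ≤ dim L`, `λⱼ(D̃|_L) ≥ min{λ, λⱼ(D)}`. -/
theorem stmt5 {E : Type*} [NormedAddCommGroup E] [InnerProductSpace ℝ E]
    [FiniteDimensional ℝ E] {ι : Type*} [Fintype ι]
    (D : E →ₗ[ℝ] E →ₗ[ℝ] ℝ)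
    (hsymm : ∀ u v, D u v = D v u) (hpsd : ∀ u, 0 ≤ D u u)
    (b : OrthonormalBasis ι ℝ E) (μe : ι → ℝ)
    (heig : ∀ i v, D (b i) v = μe i * (inner ℝ (b i) v : ℝ))
    (lam lam' : ℝ) (hlam : 0 < lam) (hlam' : lam ≤ lam')
    (P : E → E)
    (hP : ∀ u, P u = ∑ i ∈ Finset.univ.filter (fun i => μe i ≤ lam'),
      (inner ℝ (b i) u : ℝ) • b i)
    (Dt : E → E → ℝ)
    (hDt : ∀ u v, Dt u v = D (P u) (P v) + lam * (inner ℝ (u - P u) (v - P v) : ℝ)) :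
    (∀ u, Dt u u ≤ D u u) ∧
    ∀ (L : Submodule ℝ E) (j : ℕ), 1 ≤ j → j ≤ Module.finrank ℝ L →
      min lam (minimaxEigOn (fun u v => D u v) (⊤ : Submodule ℝ E) j) ≤
        minimaxEigOn Dt L j :=
  stmt5_general D hpsd b μe heig lam lam' hlam' P hP Dt hDt
end

section
/- In the setting of two finite-dimensional inner product spaces (H₁, D₁) and (H₂, D₂) with positive semidefinite symmetric forms, orthonormal eigenbases {f_i} of D₁ and {u_i} of D₂, linear maps Q₁ : H₁ → H₂ and Q₂ : H₂ → H₁, and l ≤ min{dim H₁, dim H₂}, define E₁ := sup over nonzero u ∈ span{u₁,…,u_l} of (D₁(Q₂u, Q₂u)/‖Q₂u‖₁² − D₂(u,u)/‖u‖₂²) and E₂ := sup over nonzero f ∈ span{f₁,…,f_l} of (D₂(Q₁f, Q₁f)/‖Q₁f‖₂² − D₁(f,f)/‖f‖₁²). Then for all j ∈ {1, …, l}: λⱼ(D₁) ≤ λⱼ(D₂) + E₁ and λⱼ(D₂) ≤ λⱼ(D₁) + E₂. -/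
/-!
Fix `j < l`. Inside the `(j+1)`-dimensional span of `u₀, …, u_j` there is a nonzero `v` with
`Q₂ v ⊥ f₀, …, f_{j-1}`, since these are only `j` linear conditions. The Rayleigh quotient of
`D₂` at `v` is then at most `λ_j(D₂)`, that of `D₁` at `Q₂ v ≠ 0` at least `λ_j(D₁)`, and their
difference is bounded by `E₁`. The second inequality is the same argument with the roles swapped.
-/

open Submodule Set
open scoped RealInnerProductSpace

section Rayleigh

variable {E : Type*} [NormedAddCommGroup E] [InnerProductSpace ℝ E] {ι : Type*} [Fintype ι]
  {D : E →ₗ[ℝ] E →ₗ[ℝ] ℝ} {b : OrthonormalBasis ι ℝ E} {lam : ι → ℝ}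

theorem apply_self_eq_sum_mul_inner_sq (heig : ∀ i v, D (b i) v = lam i * ⟪b i, v⟫) (w : E) :
    D w w = ∑ i, lam i * ⟪b i, w⟫ ^ 2 := by
  nth_rw 1 [← b.sum_repr' w]
  simp only [map_sum, map_smul, LinearMap.sum_apply, LinearMap.smul_apply, smul_eq_mul, heig]
  exact Finset.sum_congr rfl fun i _ => by ring

variable [LinearOrder ι]

theorem apply_self_le_mul_norm_sq (heig : ∀ i v, D (b i) v = lam i * ⟪b i, v⟫)
    (hmono : Monotone lam) {k : ι} {w : E} (hw : ∀ i, k < i → ⟪b i, w⟫ = 0) :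
    D w w ≤ lam k * ‖w‖ ^ 2 := by
  rw [apply_self_eq_sum_mul_inner_sq heig, ← b.sum_sq_inner_right, Finset.mul_sum]
  refine Finset.sum_le_sum fun i _ => ?_
  rcases le_or_gt i k with hik | hki
  · exact mul_le_mul_of_nonneg_right (hmono hik) (sq_nonneg _)
  · simp [hw i hki]

theorem mul_norm_sq_le_apply_self (heig : ∀ i v, D (b i) v = lam i * ⟪b i, v⟫)
    (hmono : Monotone lam) {k : ι} {w : E} (hw : ∀ i, i < k → ⟪b i, w⟫ = 0) :
    lam k * ‖w‖ ^ 2 ≤ D w w := by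
  rw [apply_self_eq_sum_mul_inner_sq heig, ← b.sum_sq_inner_right, Finset.mul_sum]
  refine Finset.sum_le_sum fun i _ => ?_
  rcases lt_or_ge i k with hik | hki
  · simp [hw i hik]
  · exact mul_le_mul_of_nonneg_right (hmono hki) (sq_nonneg _)

end Rayleigh

theorem Orthonormal.inner_eq_zero_of_mem_span_image {E ι : Type*} [NormedAddCommGroup E]
    [InnerProductSpace ℝ E] {b : ι → E} (hb : Orthonormal ℝ b) {s : Set ι} {i : ι} (hi : i ∉ s)
    {v : E} (hv : v ∈ span ℝ (b '' s)) : ⟪b i, v⟫ = 0 := by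
  have hspan : span ℝ (b '' s) ≤ (ℝ ∙ b i)ᗮ := by
    rw [span_le]
    rintro _ ⟨k, hk, rfl⟩
    exact mem_orthogonal_singleton_iff_inner_right.2
      (hb.inner_eq_zero (ne_of_mem_of_not_mem hk hi).symm)
  exact mem_orthogonal_singleton_iff_inner_right.1 (hspan hv)

theorem OrthonormalBasis.finrank_span_image_Iic {E : Type*} [NormedAddCommGroup E]
    [InnerProductSpace ℝ E] {n : ℕ} (b : OrthonormalBasis (Fin n) ℝ E) (k : Fin n) :
    Module.finrank ℝ (span ℝ (b '' Iic k)) = k + 1 := by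
  rw [image_eq_range, finrank_span_eq_card (b := fun x : Iic k => b x)
    (b.orthonormal.linearIndependent.comp _ Subtype.val_injective)]
  simp

theorem Submodule.exists_ne_zero_forall_inner_map_eq_zero {E F ι : Type*} [NormedAddCommGroup E]
    [InnerProductSpace ℝ E] [NormedAddCommGroup F] [InnerProductSpace ℝ F] [Fintype ι]
    (V : Submodule ℝ E) (Q : E →ₗ[ℝ] F) (g : ι → F)
    (hcard : Fintype.card ι < Module.finrank ℝ V) :
    ∃ v ∈ V, v ≠ 0 ∧ ∀ i, ⟪g i, Q v⟫ = 0 := by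
  have : FiniteDimensional ℝ V := Module.finite_of_finrank_pos (Nat.zero_lt_of_lt hcard)
  let φ : V →ₗ[ℝ] ι → ℝ := LinearMap.pi fun i => innerₛₗ ℝ (g i) ∘ₗ Q ∘ₗ V.subtype
  obtain ⟨v, hv, hv0⟩ :=
    (Submodule.ne_bot_iff _).1 (φ.ker_ne_bot_of_finrank_lt (by simpa using hcard))
  refine ⟨v, v.2, by simpa using hv0, fun i => ?_⟩
  simpa [φ] using congrFun (LinearMap.mem_ker.1 hv) i

theorem eigenvalue_le_add_of_rayleigh_sub_le {H₁ H₂ : Type*}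
    [NormedAddCommGroup H₁] [InnerProductSpace ℝ H₁]
    [NormedAddCommGroup H₂] [InnerProductSpace ℝ H₂] {n₁ n₂ : ℕ}
    {D₁ : H₁ →ₗ[ℝ] H₁ →ₗ[ℝ] ℝ} {D₂ : H₂ →ₗ[ℝ] H₂ →ₗ[ℝ] ℝ}
    {f : OrthonormalBasis (Fin n₁) ℝ H₁} {u : OrthonormalBasis (Fin n₂) ℝ H₂}
    {lam1 : Fin n₁ → ℝ} {lam2 : Fin n₂ → ℝ} (hmono₁ : Monotone lam1) (hmono₂ : Monotone lam2)
    (heig₁ : ∀ i v, D₁ (f i) v = lam1 i * ⟪f i, v⟫)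
    (heig₂ : ∀ i v, D₂ (u i) v = lam2 i * ⟪u i, v⟫)
    {Q : H₂ →ₗ[ℝ] H₁} {E : ℝ} {k₁ : Fin n₁} {k₂ : Fin n₂} (hk : (k₁ : ℕ) ≤ k₂)
    (hinj : ∀ v ∈ span ℝ (u '' Iic k₂), Q v = 0 → v = 0)
    (hE : ∀ v ∈ span ℝ (u '' Iic k₂), v ≠ 0 →
      D₁ (Q v) (Q v) / ‖Q v‖ ^ 2 - D₂ v v / ‖v‖ ^ 2 ≤ E) :
    lam1 k₁ ≤ lam2 k₂ + E := by
  obtain ⟨v, hvV, hv0, hQv⟩ := (span ℝ (u '' Iic k₂)).exists_ne_zero_forall_inner_map_eq_zero Q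
    (fun i : Iio k₁ => f i) (by simp [u.finrank_span_image_Iic]; omega)
  have hQv0 : Q v ≠ 0 := fun h => hv0 (hinj v hvV h)
  have hD₂ : D₂ v v / ‖v‖ ^ 2 ≤ lam2 k₂ :=
    (div_le_iff₀ (by positivity)).2 <| apply_self_le_mul_norm_sq heig₂ hmono₂ fun i hi =>
      u.orthonormal.inner_eq_zero_of_mem_span_image (s := Iic k₂) (not_le.2 hi) hvV
  have hD₁ : lam1 k₁ ≤ D₁ (Q v) (Q v) / ‖Q v‖ ^ 2 :=
    (le_div_iff₀ (by positivity)).2 <| mul_norm_sq_le_apply_self heig₁ hmono₁ fun i hi =>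
      hQv ⟨i, hi⟩
  linarith [hE v hvV hv0]

/-- **Two-sided eigenvalue comparison.**
Let `D₁ ≥ 0`, `D₂ ≥ 0` be symmetric bilinear forms on finite-dimensional real inner product
spaces `H₁`, `H₂` with orthonormal eigenbases `f`, `u` and nondecreasing eigenvalue lists
`lam1`, `lam2` (so `λ_{j+1}(Dᵢ) = lamᵢ j` in `0`-based indexing).  Let
`l ≤ min(dim H₁, dim H₂)`, `Q₁ : H₁ → H₂`, `Q₂ : H₂ → H₁` linear, and `E₁`, `E₂` (finite)
bounds for the Rayleigh-quotient defects on the spans of the first `l` eigenvectors of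
`D₂`, `D₁` respectively.  Then for `j = 1, …, l`:
`λⱼ(D₁) ≤ λⱼ(D₂) + E₁` and `λⱼ(D₂) ≤ λⱼ(D₁) + E₂`. -/
theorem stmt7 {H₁ H₂ : Type*}
    [NormedAddCommGroup H₁] [InnerProductSpace ℝ H₁]
    [NormedAddCommGroup H₂] [InnerProductSpace ℝ H₂]
    (n₁ n₂ : ℕ)
    (D₁ : H₁ →ₗ[ℝ] H₁ →ₗ[ℝ] ℝ) (D₂ : H₂ →ₗ[ℝ] H₂ →ₗ[ℝ] ℝ)
    (f : OrthonormalBasis (Fin n₁) ℝ H₁) (u : OrthonormalBasis (Fin n₂) ℝ H₂)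
    (lam1 : Fin n₁ → ℝ) (lam2 : Fin n₂ → ℝ) (hmono₁ : Monotone lam1) (hmono₂ : Monotone lam2)
    (heig₁ : ∀ i v, D₁ (f i) v = lam1 i * (inner ℝ (f i) v : ℝ))
    (heig₂ : ∀ i v, D₂ (u i) v = lam2 i * (inner ℝ (u i) v : ℝ))
    (l : ℕ) (hln₁ : l ≤ n₁) (hln₂ : l ≤ n₂)
    (Q₁ : H₁ →ₗ[ℝ] H₂) (Q₂ : H₂ →ₗ[ℝ] H₁) (E₁ E₂ : ℝ)
    (hinj₁ : ∀ g ∈ Submodule.span ℝ ((fun i => f i) '' {i : Fin n₁ | (i : ℕ) < l}),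
      Q₁ g = 0 → g = 0)
    (hinj₂ : ∀ v ∈ Submodule.span ℝ ((fun i => u i) '' {i : Fin n₂ | (i : ℕ) < l}),
      Q₂ v = 0 → v = 0)
    (hE₁ : ∀ v ∈ Submodule.span ℝ ((fun i => u i) '' {i : Fin n₂ | (i : ℕ) < l}), v ≠ 0 →
      D₁ (Q₂ v) (Q₂ v) / ‖Q₂ v‖ ^ 2 - D₂ v v / ‖v‖ ^ 2 ≤ E₁)
    (hE₂ : ∀ g ∈ Submodule.span ℝ ((fun i => f i) '' {i : Fin n₁ | (i : ℕ) < l}), g ≠ 0 →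
      D₂ (Q₁ g) (Q₁ g) / ‖Q₁ g‖ ^ 2 - D₁ g g / ‖g‖ ^ 2 ≤ E₂) :
    ∀ j : ℕ, ∀ hj : j < l,
      lam1 ⟨j, by omega⟩ ≤ lam2 ⟨j, by omega⟩ + E₁ ∧
      lam2 ⟨j, by omega⟩ ≤ lam1 ⟨j, by omega⟩ + E₂ := by
  intro j hj
  have hf : span ℝ (f '' Iic ⟨j, by omega⟩) ≤ span ℝ (f '' {i | (i : ℕ) < l}) :=
    span_mono <| image_mono fun i (hi : i ≤ _) => Nat.lt_of_le_of_lt hi hj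
  have hu : span ℝ (u '' Iic ⟨j, by omega⟩) ≤ span ℝ (u '' {i | (i : ℕ) < l}) :=
    span_mono <| image_mono fun i (hi : i ≤ _) => Nat.lt_of_le_of_lt hi hj
  exact ⟨eigenvalue_le_add_of_rayleigh_sub_le hmono₁ hmono₂ heig₁ heig₂ le_rfl
      (fun v hv => hinj₂ v (hu hv)) (fun v hv => hE₁ v (hu hv)),
    eigenvalue_le_add_of_rayleigh_sub_le hmono₂ hmono₁ heig₂ heig₁ le_rfl
      (fun g hg => hinj₁ g (hf hg)) (fun g hg => hE₂ g (hf hg))⟩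
end

section
/- Under the same approximation hypotheses, if additionally there exists L ∈ (0, ∞) with d(x, y) ≤ L ‖ι(x) − ι(y)‖ for all x, y ∈ M, then there exists a sequence τ_i > 0 with τ_i → 0 such that for all i and all x, y ∈ M_i, d_i(x, y) ≤ L ‖ι_i(x) − ι_i(y)‖ + τ_i. Indeed one may take τ_i = 2L sup_{z ∈ M} ‖ι_i(ψ_i(z)) − ι(z)‖ + (2L + 3) ε_i. -/
open Filter

/-- **Transfer of the reverse-Lipschitz bound to the approximating spaces.**
Under the approximation hypotheses, if in addition `d(x,y) ≤ L‖ι(x) − ι(y)‖` on `M`,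
then there is a sequence `τᵢ > 0` with `τᵢ → 0` such that
`dᵢ(x,y) ≤ L‖ιᵢ(x) − ιᵢ(y)‖ + τᵢ` on each `Mᵢ`; indeed one may take
`τᵢ = 2L·sup_{z∈M} ‖ιᵢ(ψᵢ(z)) − ι(z)‖ + (2L + 3)εᵢ`. -/
theorem stmt11 {M : Type*} [MetricSpace M] [CompactSpace M] [Nonempty M] (d : ℕ)
    (ι : M → EuclideanSpace ℝ (Fin d))
    (Mi : ℕ → Type*) [∀ i, MetricSpace (Mi i)]
    (ε : ℕ → ℝ) (hεpos : ∀ i, 0 < ε i) (hε0 : Tendsto ε atTop (nhds 0))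
    (ιi : ∀ i, Mi i → EuclideanSpace ℝ (Fin d)) (ψ : ∀ i, M → Mi i)
    (h1 : ∀ i (x y : M), |dist x y - dist (ψ i x) (ψ i y)| ≤ ε i)
    (h2 : ∀ i (z : Mi i), ∃ x : M, dist z (ψ i x) ≤ ε i)
    (h3 : ∀ i (x y : Mi i), ‖ιi i x - ιi i y‖ ≤ dist x y)
    (h4 : ∀ x : M, Tendsto (fun i => ιi i (ψ i x)) atTop (nhds (ι x)))
    (L : ℝ) (hLpos : 0 < L)
    (hL : ∀ x y : M, dist x y ≤ L * ‖ι x - ι y‖) :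
    ∃ τ : ℕ → ℝ,
      (∀ i, τ i = 2 * L * (⨆ z : M, ‖ιi i (ψ i z) - ι z‖) + (2 * L + 3) * ε i) ∧
      (∀ i, 0 < τ i) ∧ Tendsto τ atTop (nhds 0) ∧
      ∀ i (x y : Mi i), dist x y ≤ L * ‖ιi i x - ιi i y‖ + τ i := by
  classical
  set δ : ℕ → ℝ := fun i => ⨆ z : M, ‖ιi i (ψ i z) - ι z‖ with hδdef
  -- ι is 1-Lipschitz
  have hιlip : ∀ x y : M, ‖ι x - ι y‖ ≤ dist x y := by
    intro x y
    have hlim : Tendsto (fun i => ‖ιi i (ψ i x) - ιi i (ψ i y)‖) atTop (nhds ‖ι x - ι y‖) :=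
      ((h4 x).sub (h4 y)).norm
    have hlim2 : Tendsto (fun i => dist x y + ε i) atTop (nhds (dist x y)) := by
      simpa using (tendsto_const_nhds.add hε0)
    refine le_of_tendsto_of_tendsto' hlim hlim2 (fun i => ?_)
    calc ‖ιi i (ψ i x) - ιi i (ψ i y)‖ ≤ dist (ψ i x) (ψ i y) := h3 i _ _
      _ ≤ dist x y + ε i := by
          have := h1 i x y; rw [abs_le] at this; linarith [this.1, this.2]
  -- a diameter bound on M
  obtain ⟨C, hC⟩ : ∃ C, ∀ x y : M, dist x y ≤ C :=
    ⟨Metric.diam (Set.univ : Set M), fun x y =>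
      Metric.dist_le_diam_of_mem isCompact_univ.isBounded trivial trivial⟩
  have hbdd : ∀ i, BddAbove (Set.range fun z : M => ‖ιi i (ψ i z) - ι z‖) := by
    intro i
    obtain ⟨z₀⟩ := ‹Nonempty M›
    refine ⟨‖ιi i (ψ i z₀) - ι z₀‖ + 2 * C + ε i, ?_⟩
    rintro _ ⟨z, rfl⟩
    have hA : ‖ιi i (ψ i z) - ιi i (ψ i z₀)‖ ≤ C + ε i := by
      have h := h1 i z z₀; rw [abs_le] at h
      have := h3 i (ψ i z) (ψ i z₀)
      have := hC z z₀
      linarith [h.1, h.2]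
    have hB : ‖ι z₀ - ι z‖ ≤ C := (hιlip z₀ z).trans (hC _ _)
    have hsplit : ιi i (ψ i z) - ι z =
        (ιi i (ψ i z) - ιi i (ψ i z₀)) + (ιi i (ψ i z₀) - ι z₀) + (ι z₀ - ι z) := by abel
    calc ‖ιi i (ψ i z) - ι z‖
        ≤ ‖ιi i (ψ i z) - ιi i (ψ i z₀)‖ + ‖ιi i (ψ i z₀) - ι z₀‖ + ‖ι z₀ - ι z‖ := by
          rw [hsplit]; exact norm_add₃_le
      _ ≤ ‖ιi i (ψ i z₀) - ι z₀‖ + 2 * C + ε i := by linarith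
  have hδnonneg : ∀ i, 0 ≤ δ i := fun i => Real.iSup_nonneg fun z => norm_nonneg _
  have hle : ∀ i (z : M), ‖ιi i (ψ i z) - ι z‖ ≤ δ i := fun i z => le_ciSup (hbdd i) z
  -- δ → 0 (uniform convergence from pointwise + almost-equicontinuity)
  have hδ0 : Tendsto δ atTop (nhds 0) := by
    rw [Metric.tendsto_atTop]
    intro η hη
    have hη8 : 0 < η / 8 := by linarith
    obtain ⟨t, -, htfin, htcov⟩ :=
      finite_cover_balls_of_compact (isCompact_univ : IsCompact (Set.univ : Set M)) hη8
    have hev1 : ∀ᶠ i in atTop, ε i < η / 8 := hε0.eventually_lt_const hη8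
    have hev2 : ∀ᶠ i in atTop, ∀ j ∈ t, ‖ιi i (ψ i j) - ι j‖ < η / 8 := by
      rw [eventually_all_finite htfin]
      intro j _
      have : Tendsto (fun i => ‖ιi i (ψ i j) - ι j‖) atTop (nhds 0) := by
        simpa using ((h4 j).sub (tendsto_const_nhds (x := ι j))).norm
      exact this.eventually_lt_const hη8
    obtain ⟨N, hN⟩ := (hev1.and hev2).exists_forall_of_atTop
    refine ⟨N, fun i hi => ?_⟩
    obtain ⟨hεi, hji⟩ := hN i hi
    have hδle : δ i ≤ η / 2 := by
      refine ciSup_le fun z => ?_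
      obtain ⟨j, hjt, hjz⟩ : ∃ j ∈ t, z ∈ Metric.ball j (η / 8) := by
        simpa using htcov (Set.mem_univ z)
      have hd : dist z j < η / 8 := by simpa [Metric.mem_ball] using hjz
      have hA : ‖ιi i (ψ i z) - ιi i (ψ i j)‖ ≤ dist z j + ε i := by
        have h := h1 i z j; rw [abs_le] at h
        have := h3 i (ψ i z) (ψ i j)
        linarith [h.1, h.2]
      have hB : ‖ιi i (ψ i j) - ι j‖ < η / 8 := hji j hjt
      have hCz : ‖ι j - ι z‖ ≤ dist z j := by
        have := hιlip j z; rwa [dist_comm j z] at this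
      have hsplit : ιi i (ψ i z) - ι z =
          (ιi i (ψ i z) - ιi i (ψ i j)) + (ιi i (ψ i j) - ι j) + (ι j - ι z) := by abel
      calc ‖ιi i (ψ i z) - ι z‖
          ≤ ‖ιi i (ψ i z) - ιi i (ψ i j)‖ + ‖ιi i (ψ i j) - ι j‖ + ‖ι j - ι z‖ := by
            rw [hsplit]; exact norm_add₃_le
        _ ≤ η / 2 := by linarith
    have : |δ i| = δ i := abs_of_nonneg (hδnonneg i)
    rw [Real.dist_eq, sub_zero, this]
    linarith
  refine ⟨fun i => 2 * L * δ i + (2 * L + 3) * ε i, fun i => rfl, ?_, ?_, ?_⟩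
  · intro i
    show 0 < 2 * L * δ i + (2 * L + 3) * ε i
    have := hδnonneg i
    have := hεpos i
    nlinarith
  · have : Tendsto (fun i => 2 * L * δ i + (2 * L + 3) * ε i) atTop
        (nhds (2 * L * 0 + (2 * L + 3) * 0)) :=
      ((tendsto_const_nhds.mul hδ0).add (tendsto_const_nhds.mul hε0))
    simpa using this
  · intro i x y
    obtain ⟨a, ha⟩ := h2 i x
    obtain ⟨b, hb⟩ := h2 i y
    have hab := h1 i a b; rw [abs_le] at hab
    have hstep1 : dist x y ≤ dist a b + 3 * ε i := by
      have := dist_triangle4 x (ψ i a) (ψ i b) y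
      have := dist_comm y (ψ i b)
      have := hεpos i
      calc dist x y ≤ dist x (ψ i a) + dist (ψ i a) (ψ i b) + dist (ψ i b) y :=
            dist_triangle4 x (ψ i a) (ψ i b) y
        _ ≤ ε i + (dist a b + ε i) + ε i := by
            have hyb : dist (ψ i b) y = dist y (ψ i b) := dist_comm _ _
            have := hab.1
            gcongr <;> linarith
        _ = dist a b + 3 * ε i := by ring
    have hnorm : ‖ι a - ι b‖ ≤ ‖ιi i x - ιi i y‖ + 2 * ε i + 2 * δ i := by
      have hA : ‖ι a - ιi i (ψ i a)‖ ≤ δ i := by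
        have := hle i a; rwa [norm_sub_rev] at this
      have hA' : ‖ιi i (ψ i a) - ιi i x‖ ≤ ε i := by
        have h := h3 i (ψ i a) x
        rw [dist_comm] at h
        exact h.trans ha
      have hB' : ‖ιi i y - ιi i (ψ i b)‖ ≤ ε i := (h3 i _ _).trans hb
      have hB : ‖ιi i (ψ i b) - ι b‖ ≤ δ i := hle i b
      have hsplit : ι a - ι b = (ι a - ιi i (ψ i a)) + (ιi i (ψ i a) - ιi i x)
          + (ιi i x - ιi i y) + (ιi i y - ιi i (ψ i b)) + (ιi i (ψ i b) - ι b) := by abel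
      calc ‖ι a - ι b‖ ≤ ‖ι a - ιi i (ψ i a)‖ + ‖ιi i (ψ i a) - ιi i x‖
            + ‖ιi i x - ιi i y‖ + ‖ιi i y - ιi i (ψ i b)‖ + ‖ιi i (ψ i b) - ι b‖ := by
            rw [hsplit]
            exact le_trans (norm_add_le _ _) (by
              gcongr
              exact le_trans (norm_add_le _ _) (by gcongr; exact norm_add₃_le))
        _ ≤ ‖ιi i x - ιi i y‖ + 2 * ε i + 2 * δ i := by linarith
    have hmul : L * ‖ι a - ι b‖ ≤ L * (‖ιi i x - ιi i y‖ + 2 * ε i + 2 * δ i) :=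
      mul_le_mul_of_nonneg_left hnorm hLpos.le
    have := hL a b
    show dist x y ≤ L * ‖ιi i x - ιi i y‖ + (2 * L * δ i + (2 * L + 3) * ε i)
    nlinarith [hstep1]
end

section
/- Let M ⊂ ℝ^D be a closed embedded submanifold with second fundamental form bounded by ‖II‖_{L^∞} ≤ 1/R. Then for any x, y ∈ M with intrinsic (geodesic) distance d(x, y) ≤ πR, the Euclidean distance satisfies ‖x − y‖ ≥ 2R sin(d(x,y)/(2R)). -/
open scoped RealInnerProductSpace

/-- First-crossing lemma: if `g 0 > 0` and at every zero of `g` in `(0, T]` the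
derivative of `g` is strictly positive, then `g > 0` on `[0, T]`. -/
private lemma aux_first_crossing (g : ℝ → ℝ) (T : ℝ) (hg : Differentiable ℝ g)
    (h0 : 0 < g 0)
    (hcross : ∀ t, 0 < t → t ≤ T → g t = 0 → 0 < deriv g t) :
    ∀ t, 0 ≤ t → t ≤ T → 0 < g t := by
  by_contra h
  push_neg at h
  obtain ⟨t₁, ht₁0, ht₁T, ht₁⟩ := h
  set S : Set ℝ := Set.Icc 0 T ∩ {t | g t ≤ 0} with hSdef
  have hclosed : IsClosed S := isClosed_Icc.inter (isClosed_le hg.continuous continuous_const)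
  have hne : S.Nonempty := ⟨t₁, ⟨ht₁0, ht₁T⟩, ht₁⟩
  have hbdd : BddBelow S := ⟨0, fun x hx => hx.1.1⟩
  set t₀ := sInf S with ht₀def
  have ht₀S : t₀ ∈ S := hclosed.csInf_mem hne hbdd
  have ht₀0 : 0 ≤ t₀ := ht₀S.1.1
  have ht₀T : t₀ ≤ T := ht₀S.1.2
  have hgt₀ : g t₀ ≤ 0 := ht₀S.2
  have ht₀pos : 0 < t₀ := by
    rcases eq_or_lt_of_le ht₀0 with h | h
    · exfalso; rw [← h] at hgt₀; linarith
    · exact h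
  have hposlt : ∀ s, 0 ≤ s → s < t₀ → 0 < g s := by
    intro s hs0 hst₀
    by_contra hgs
    push_neg at hgs
    have : s ∈ S := ⟨⟨hs0, le_trans (le_of_lt hst₀) ht₀T⟩, hgs⟩
    have := csInf_le hbdd this
    linarith
  -- g t₀ ≥ 0 by left continuity
  have hmem : Set.Ioo 0 t₀ ∈ nhdsWithin t₀ (Set.Iio t₀) :=
    Ioo_mem_nhdsLT_of_mem ⟨ht₀pos, le_refl _⟩
  have hge : 0 ≤ g t₀ := by
    have htend : Filter.Tendsto g (nhdsWithin t₀ (Set.Iio t₀)) (nhds (g t₀)) :=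
      (hg.continuous.continuousAt).tendsto.mono_left nhdsWithin_le_nhds
    refine ge_of_tendsto htend ?_
    filter_upwards [hmem] with s hs
    exact le_of_lt (hposlt s (le_of_lt hs.1) hs.2)
  have hzero : g t₀ = 0 := le_antisymm hgt₀ hge
  have hdpos : 0 < deriv g t₀ := hcross t₀ ht₀pos ht₀T hzero
  -- but the left difference quotients are ≤ 0
  have hslope : Filter.Tendsto (slope g t₀) (nhdsWithin t₀ (Set.Iio t₀)) (nhds (deriv g t₀)) := by
    have := hasDerivAt_iff_tendsto_slope.mp (hg t₀).hasDerivAt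
    exact this.mono_left (nhdsWithin_mono _ (fun x hx => ne_of_lt hx))
  have hle : deriv g t₀ ≤ 0 := by
    refine le_of_tendsto hslope ?_
    filter_upwards [hmem] with s hs
    have hgs : 0 < g s := hposlt s (le_of_lt hs.1) hs.2
    have : slope g t₀ s = g s / (s - t₀) := by
      simp [slope, hzero, div_eq_inv_mul]
    rw [this]
    exact div_nonpos_of_nonneg_of_nonpos (le_of_lt hgs) (by linarith [hs.2])
  linarith

/-- ODE comparison: a differentiable `f` with `f 0 = 1` and `f² + f'² ≤ 1` on `[0, T]`
(with `T ≤ π`) satisfies `f t ≥ cos t` on `[0, T]`. -/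
private lemma aux_ge_cos (f : ℝ → ℝ) (T : ℝ) (hf : Differentiable ℝ f)
    (hT : T ≤ Real.pi) (h0 : f 0 = 1)
    (hode : ∀ t, 0 ≤ t → t ≤ T → f t ^ 2 + deriv f t ^ 2 ≤ 1) :
    ∀ t, 0 ≤ t → t ≤ T → Real.cos t ≤ f t := by
  intro t ht0 htT
  have hfsq : f t ^ 2 ≤ 1 := by nlinarith [hode t ht0 htT, sq_nonneg (deriv f t)]
  have hfm1 : -1 ≤ f t := by nlinarith
  rcases eq_or_lt_of_le (htT.trans hT) with hπ | hπ
  · have hc : Real.cos t = -1 := by rw [hπ, Real.cos_pi]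
    linarith
  -- t < π : compare with cos ((1+δ) u + δ) and let δ → 0⁺
  have key : ∀ δ : ℝ, 0 < δ → (1 + δ) * t + δ < Real.pi →
      Real.cos ((1 + δ) * t + δ) ≤ f t := by
    intro δ hδ hδπ
    set c : ℝ → ℝ := fun u => Real.cos ((1 + δ) * u + δ) with hcdef
    have hlin : ∀ u : ℝ, HasDerivAt (fun u : ℝ => (1 + δ) * u + δ) (1 + δ) u := by
      intro u
      simpa using ((hasDerivAt_id u).const_mul (1 + δ)).add_const δ
    have hcD : ∀ u : ℝ, HasDerivAt c (-Real.sin ((1 + δ) * u + δ) * (1 + δ)) u := by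
      intro u
      exact (Real.hasDerivAt_cos ((1 + δ) * u + δ)).comp u (hlin u)
    have hgdiff : Differentiable ℝ (fun u => f u - c u) :=
      hf.sub (fun u => (hcD u).differentiableAt)
    have hg0 : 0 < f 0 - c 0 := by
      have hδπ' : δ < Real.pi := by nlinarith [hδ, ht0]
      have hlt : Real.cos δ < 1 := by
        have := Real.cos_lt_cos_of_nonneg_of_le_pi (le_refl 0) hδπ'.le hδ
        rwa [Real.cos_zero] at this
      have hc0 : c 0 = Real.cos δ := by
        simp only [hcdef]
        norm_num
      rw [h0, hc0]
      linarith
    have hcr : ∀ u, 0 < u → u ≤ t → (f u - c u) = 0 → 0 < deriv (fun u => f u - c u) u := by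
      intro u hu0 hut hgu
      set θ := (1 + δ) * u + δ with hθdef
      have hθ0 : 0 < θ := by nlinarith
      have hθπ : θ < Real.pi := by nlinarith
      have hsin : 0 < Real.sin θ := Real.sin_pos_of_pos_of_lt_pi hθ0 hθπ
      have hfu : f u = Real.cos θ := by
        have : c u = Real.cos θ := rfl
        linarith [hgu, this]
      have hD : HasDerivAt (fun u => f u - c u)
          (deriv f u - (-Real.sin θ * (1 + δ))) u := (hf u).hasDerivAt.sub (hcD u)
      rw [hD.deriv]
      have hodeu := hode u (le_of_lt hu0) (le_trans hut htT)
      have hsc : Real.sin θ ^ 2 + Real.cos θ ^ 2 = 1 := Real.sin_sq_add_cos_sq θ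
      have hderivsq : deriv f u ^ 2 ≤ Real.sin θ ^ 2 := by nlinarith [hfu ▸ hodeu]
      have hlb : -Real.sin θ ≤ deriv f u := by
        nlinarith [sq_nonneg (deriv f u + Real.sin θ)]
      nlinarith
    have := aux_first_crossing (fun u => f u - c u) t hgdiff hg0 hcr t ht0 (le_refl t)
    simp only [hcdef] at this
    linarith
  have htend : Filter.Tendsto (fun δ : ℝ => Real.cos ((1 + δ) * t + δ))
      (nhdsWithin 0 (Set.Ioi 0)) (nhds (Real.cos t)) := by
    have hcont : Continuous (fun δ : ℝ => Real.cos ((1 + δ) * t + δ)) :=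
      Real.continuous_cos.comp (((continuous_const.add continuous_id).mul continuous_const).add
        continuous_id)
    have h1 : Filter.Tendsto (fun δ : ℝ => Real.cos ((1 + δ) * t + δ)) (nhds 0)
        (nhds (Real.cos ((1 + 0) * t + 0))) := hcont.tendsto 0
    have h2 : Real.cos ((1 + 0) * t + 0) = Real.cos t := by norm_num
    rw [h2] at h1
    exact h1.mono_left nhdsWithin_le_nhds
  refine le_of_tendsto htend ?_
  have hεpos : 0 < (Real.pi - t) / (t + 1) := by
    apply div_pos (by linarith) (by linarith)
  filter_upwards [Ioo_mem_nhdsGT_of_mem (Set.mem_Ico.mpr ⟨le_refl (0:ℝ), hεpos⟩)] with δ hδ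
  refine key δ hδ.1 ?_
  have := hδ.2
  have h1 : δ * (t + 1) < Real.pi - t := by
    calc δ * (t + 1) < (Real.pi - t) / (t + 1) * (t + 1) := by
          apply mul_lt_mul_of_pos_right this (by linarith)
      _ = Real.pi - t := by field_simp
  nlinarith

/-- Key lemma: a differentiable unit-vector curve `g` with `‖g'‖ ≤ 1/R` on `[0, L]`
has slowly varying direction: `⟪g t, g s⟫ ≥ cos ((t - s)/R)` for `0 ≤ s ≤ t ≤ L`
with `t - s ≤ πR`. -/
private lemma aux_key {E : Type*} [NormedAddCommGroup E] [InnerProductSpace ℝ E]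
    (g : ℝ → E) (R L s t : ℝ) (hR : 0 < R)
    (hgd : Differentiable ℝ g)
    (hunit : ∀ u, ‖g u‖ = 1)
    (hacc : ∀ u ∈ Set.Icc 0 L, ‖deriv g u‖ ≤ 1 / R)
    (hs : s ∈ Set.Icc 0 L) (ht : t ∈ Set.Icc 0 L)
    (hst : s ≤ t) (htsR : t - s ≤ Real.pi * R) :
    Real.cos ((t - s) / R) ≤ ⟪g t, g s⟫ := by
  have horth : ∀ u, ⟪deriv g u, g u⟫ = 0 := by
    intro u
    have hconst : (fun u => ⟪g u, g u⟫) = fun _ : ℝ => (1 : ℝ) := by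
      funext w
      rw [real_inner_self_eq_norm_sq, hunit w]; norm_num
    have hD : HasDerivAt (fun u => ⟪g u, g u⟫)
        (⟪g u, deriv g u⟫ + ⟪deriv g u, g u⟫) u :=
      (hgd u).hasDerivAt.inner ℝ (hgd u).hasDerivAt
    rw [hconst] at hD
    have := hD.unique (hasDerivAt_const u (1 : ℝ))
    have hcomm : ⟪g u, deriv g u⟫ = ⟪deriv g u, g u⟫ := real_inner_comm _ _
    linarith [this, hcomm.symm ▸ this]
  set v := g s with hvdef
  set f : ℝ → ℝ := fun u => ⟪g (s + u * R), v⟫ with hfdef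
  have hγD : ∀ u : ℝ, HasDerivAt (fun u : ℝ => g (s + u * R)) (R • deriv g (s + u * R)) u := by
    intro u
    have hlin : HasDerivAt (fun u : ℝ => s + u * R) R u := by
      simpa using ((hasDerivAt_id u).mul_const R).const_add s
    exact HasDerivAt.scomp u (hgd _).hasDerivAt hlin
  have hfD : ∀ u : ℝ, HasDerivAt f (R * ⟪deriv g (s + u * R), v⟫) u := by
    intro u
    have := (hγD u).inner ℝ (hasDerivAt_const u v)
    simpa [inner_smul_left] using this
  have hfdiff : Differentiable ℝ f := fun u => (hfD u).differentiableAt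
  have hf0 : f 0 = 1 := by
    simp only [hfdef, zero_mul, add_zero, hvdef]
    rw [real_inner_self_eq_norm_sq, hunit s]; norm_num
  set T := (t - s) / R with hTdef
  have hT0 : 0 ≤ T := div_nonneg (by linarith) (le_of_lt hR)
  have hTπ : T ≤ Real.pi := by
    rw [hTdef, div_le_iff₀ hR]; linarith
  have hode : ∀ u, 0 ≤ u → u ≤ T → f u ^ 2 + deriv f u ^ 2 ≤ 1 := by
    intro u hu0 huT
    set τ := s + u * R with hτdef
    have hτmem : τ ∈ Set.Icc 0 L := by
      constructor
      · have : 0 ≤ u * R := mul_nonneg hu0 (le_of_lt hR)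
        linarith [hs.1]
      · have h1 : u * R ≤ T * R := mul_le_mul_of_nonneg_right huT hR.le
        have h2 : T * R = t - s := by rw [hTdef]; field_simp
        linarith [ht.2]
    set c : ℝ := ⟪g τ, v⟫ with hcdef
    have hfu : f u = c := rfl
    have hfd : deriv f u = R * ⟪deriv g τ, v⟫ := (hfD u).deriv
    -- project v orthogonally to g τ
    have hproj : ⟪deriv g τ, v⟫ = ⟪deriv g τ, v - c • g τ⟫ := by
      rw [inner_sub_right, real_inner_smul_right, horth τ]; ring
    have hw : ‖v - c • g τ‖ ^ 2 = 1 - c ^ 2 := by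
      have h1 : ⟪v, g τ⟫ = c := real_inner_comm _ _
      have h2 : ‖c • g τ‖ ^ 2 = c ^ 2 := by
        rw [norm_smul, hunit τ, mul_one, Real.norm_eq_abs, sq_abs]
      have h3 : ‖v‖ = 1 := by rw [hvdef]; exact hunit s
      rw [norm_sub_sq_real, real_inner_smul_right, h1, h2, h3]
      ring
    have hCS : |⟪deriv g τ, v - c • g τ⟫| ≤ ‖deriv g τ‖ * ‖v - c • g τ‖ :=
      abs_real_inner_le_norm _ _
    have hgn : ‖deriv g τ‖ ≤ 1 / R := hacc τ hτmem
    have hsq : ⟪deriv g τ, v - c • g τ⟫ ^ 2 ≤ (1 / R) ^ 2 * (1 - c ^ 2) := by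
      have h1 : ⟪deriv g τ, v - c • g τ⟫ ^ 2 ≤ (‖deriv g τ‖ * ‖v - c • g τ‖) ^ 2 := by
        rw [← sq_abs]
        exact pow_le_pow_left₀ (abs_nonneg _) hCS 2
      have h2 : (‖deriv g τ‖ * ‖v - c • g τ‖) ^ 2 ≤ (1 / R) ^ 2 * (1 - c ^ 2) := by
        rw [mul_pow, ← hw]
        apply mul_le_mul_of_nonneg_right _ (sq_nonneg _)
        exact pow_le_pow_left₀ (norm_nonneg _) hgn 2
      linarith
    rw [hfu, hfd, hproj]
    have hRne : R ≠ 0 := ne_of_gt hR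
    have : (R * ⟪deriv g τ, v - c • g τ⟫) ^ 2 ≤ 1 - c ^ 2 := by
      rw [mul_pow]
      calc R ^ 2 * ⟪deriv g τ, v - c • g τ⟫ ^ 2
          ≤ R ^ 2 * ((1 / R) ^ 2 * (1 - c ^ 2)) := by
            apply mul_le_mul_of_nonneg_left hsq (sq_nonneg R)
        _ = 1 - c ^ 2 := by field_simp
    linarith
  have hfin := aux_ge_cos f T hfdiff hTπ hf0 hode T hT0 (le_refl T)
  have hTR : s + T * R = t := by
    rw [hTdef]; field_simp; ring
  have hft : f T = ⟪g t, g s⟫ := by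
    show ⟪g (s + T * R), g s⟫ = ⟪g t, g s⟫
    rw [hTR]
  linarith [hft ▸ hfin]

/-- **Chord bound for submanifolds with bounded second fundamental form
(Lemma 3 of Boissonnat–de Silva–Lieutier–Turner, as used in the paper).**
`M ⊂ ℝ^D` is a closed submanifold with `‖II‖_{L∞} ≤ 1/R` and intrinsic (geodesic)
distance `dM`.  Since Mathlib has no theory of second fundamental forms, the submanifold
structure is encoded by its defining property: any two points `x, y ∈ M` are joined by a
smooth unit-speed minimizing geodesic `γ` in `M` of length `dM x y`, whose Euclidean
acceleration satisfies `‖γ''‖ = ‖II(γ',γ')‖ ≤ 1/R`.  Conclusion: if `dM x y ≤ πR` then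
`‖x − y‖ ≥ 2R sin(dM x y/(2R))`. -/
theorem stmt12 (D : ℕ) (R : ℝ) (hR : 0 < R)
    (M : Set (EuclideanSpace ℝ (Fin D))) (hM : IsCompact M)
    (dM : EuclideanSpace ℝ (Fin D) → EuclideanSpace ℝ (Fin D) → ℝ)
    (hd_nonneg : ∀ x y, 0 ≤ dM x y)
    (hd_ge : ∀ x ∈ M, ∀ y ∈ M, ‖x - y‖ ≤ dM x y)
    (hgeo : ∀ x ∈ M, ∀ y ∈ M, ∃ γ : ℝ → EuclideanSpace ℝ (Fin D),
      ContDiff ℝ (⊤ : ℕ∞) γ ∧ γ 0 = x ∧ γ (dM x y) = y ∧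
      (∀ t ∈ Set.Icc 0 (dM x y), γ t ∈ M) ∧
      (∀ t, ‖deriv γ t‖ = 1) ∧
      (∀ t ∈ Set.Icc 0 (dM x y), ‖deriv (deriv γ) t‖ ≤ 1 / R)) :
    ∀ x ∈ M, ∀ y ∈ M, dM x y ≤ Real.pi * R →
      2 * R * Real.sin (dM x y / (2 * R)) ≤ ‖x - y‖ := by
  intro x hx y hy hLπ
  obtain ⟨γ, hγ, hγ0, hγL, hγM, hγ1, hγ2⟩ := hgeo x hx y hy
  set L := dM x y with hLdef
  have hL0 : 0 ≤ L := hd_nonneg x y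
  have hπpos := Real.pi_pos
  set g := deriv γ with hgdef
  have hγd : Differentiable ℝ γ := hγ.differentiable (by simp)
  have hgc : ContDiff ℝ (⊤ : ℕ∞) g := (contDiff_infty_iff_deriv.mp (hγ.of_le (by simp))).2
  have hgd : Differentiable ℝ g := hgc.differentiable (by simp)
  set v := g (L / 2) with hvdef
  have hv : ‖v‖ = 1 := hγ1 _
  have hhalf : L / 2 ∈ Set.Icc 0 L := ⟨by linarith, by linarith⟩
  have hkey : ∀ t ∈ Set.Icc (0:ℝ) L, Real.cos ((t - L / 2) / R) ≤ ⟪v, g t⟫ := by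
    intro t ht
    rcases le_total (L / 2) t with h | h
    · have := aux_key g R L (L / 2) t hR hgd hγ1 hγ2 hhalf ht h (by linarith [ht.2, hR.le])
      rw [real_inner_comm] at this
      exact this
    · have := aux_key g R L t (L / 2) hR hgd hγ1 hγ2 ht hhalf h (by nlinarith [ht.1])
      have hcos : Real.cos ((t - L / 2) / R) = Real.cos ((L / 2 - t) / R) := by
        rw [← Real.cos_neg ((L / 2 - t) / R)]
        ring_nf
      rw [hcos]
      exact this
  have hgcont : Continuous g := hgc.continuous
  have hint : (∫ u in (0:ℝ)..L, g u) = y - x := by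
    rw [intervalIntegral.integral_deriv_eq_sub (fun u _ => hγd u)
      (hgcont.intervalIntegrable 0 L), hγ0, hγL]
  have hinner : (∫ u in (0:ℝ)..L, ⟪v, g u⟫) = ⟪v, y - x⟫ := by
    have := ContinuousLinearMap.intervalIntegral_comp_comm (μ := MeasureTheory.volume) (innerSL ℝ v)
      (hgcont.intervalIntegrable 0 L)
    rw [hint] at this
    simpa using this
  have hFder : ∀ u ∈ Set.uIcc (0:ℝ) L,
      HasDerivAt (fun u => R * Real.sin ((u - L / 2) / R)) (Real.cos ((u - L / 2) / R)) u := by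
    intro u _
    have h1 : HasDerivAt (fun u : ℝ => (u - L / 2) / R) (1 / R) u := by
      simpa using ((hasDerivAt_id u).sub_const (L / 2)).div_const R
    have := ((Real.hasDerivAt_sin ((u - L / 2) / R)).comp u h1).const_mul R
    refine this.congr_deriv ?_
    field_simp
  have hcoscont : Continuous (fun u : ℝ => Real.cos ((u - L / 2) / R)) :=
    Real.continuous_cos.comp ((continuous_id.sub continuous_const).div_const R)
  have hcalc : (∫ u in (0:ℝ)..L, Real.cos ((u - L / 2) / R)) = 2 * R * Real.sin (L / (2 * R)) := by
    rw [intervalIntegral.integral_eq_sub_of_hasDerivAt hFder (hcoscont.intervalIntegrable 0 L)]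
    have hRne : R ≠ 0 := ne_of_gt hR
    have e1 : (L - L / 2) / R = L / (2 * R) := by field_simp; ring
    have e2 : ((0:ℝ) - L / 2) / R = -(L / (2 * R)) := by field_simp; ring
    rw [e1, e2, Real.sin_neg]
    ring
  have hmono : (∫ u in (0:ℝ)..L, Real.cos ((u - L / 2) / R)) ≤ ∫ u in (0:ℝ)..L, ⟪v, g u⟫ := by
    apply intervalIntegral.integral_mono_on hL0 (hcoscont.intervalIntegrable 0 L)
      ((continuous_const.inner hgcont).intervalIntegrable 0 L)
    exact hkey
  have hCS : ⟪v, y - x⟫ ≤ ‖y - x‖ := by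
    calc ⟪v, y - x⟫ ≤ ‖v‖ * ‖y - x‖ := real_inner_le_norm _ _
      _ = ‖y - x‖ := by rw [hv, one_mul]
  have hnrev : ‖y - x‖ = ‖x - y‖ := norm_sub_rev _ _
  linarith [hcalc ▸ hmono, hinner ▸ hmono]
end

section
/- Let M ⊂ ℝ^D be a closed embedded submanifold with ‖II‖_{L^∞} ≤ 1/R, and define s(R) := sup{s > 0 : for all x, y ∈ M, ‖x − y‖ < s implies d(x, y) ≤ πR}. Then for all x, y ∈ M with ‖x − y‖ < s(R): ‖x − y‖ ≥ (1 − (π²/(96 R²)) ‖x − y‖²) · d(x, y). -/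
open scoped RealInnerProductSpace

private lemma sq_key13 (h c : ℝ) (hh1 : h ≤ 1) (hc : c ^ 2 ≤ Real.pi ^ 2 / 4)
    (hp : 1 - h ≤ c ^ 2 / 2) :
    1 - h ^ 2 ≤ (c * (1 - c ^ 2 / 8)) ^ 2 := by
  have h1 : (3.141592 : ℝ) < Real.pi := Real.pi_gt_d6
  have h2 : Real.pi < 3.141593 := Real.pi_lt_d6
  have hc' : c ^ 2 ≤ 2.46741 := by nlinarith
  rcases le_or_gt (1 - h) 1 with hcase | hcase
  · nlinarith [sq_nonneg c, sq_nonneg (c ^ 2 - 2 * (1 - h)),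
      mul_nonneg (sub_nonneg.2 hh1) (sub_nonneg.2 hh1)]
  · nlinarith [sq_nonneg (c ^ 2 - 2), sq_nonneg c,
      mul_nonneg (sub_nonneg.2 hh1) (sq_nonneg c)]

private lemma poly_key13 (y : ℝ) (h0 : 0 ≤ y) (hy : y ≤ Real.pi ^ 2) :
    1 / 24 - y / 2560 ≤ Real.pi ^ 2 / 96 * (1 - y / 24 + y ^ 2 / 2560) ^ 2 := by
  have h1 : (3.141592 : ℝ) < Real.pi := Real.pi_gt_d6
  have h2 : Real.pi < 3.141593 := Real.pi_lt_d6
  have hp2 : (9.8696 : ℝ) ≤ Real.pi ^ 2 := by nlinarith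
  have hy' : y ≤ 9.8697 := by nlinarith
  nlinarith [sq_nonneg (y - 5), sq_nonneg (y - 9), sq_nonneg y, sq_nonneg (y - 7),
    mul_nonneg h0 h0, sq_nonneg (1 - y / 24 + y ^ 2 / 2560),
    mul_nonneg (mul_nonneg h0 h0) h0]

set_option maxHeartbeats 1000000 in
/-- Quantitative chord–arc bound for a unit-speed curve with acceleration ≤ 1/R. -/
private lemma chord_ge13 (D : ℕ) (R : ℝ) (hR : 0 < R) (γ : ℝ → EuclideanSpace ℝ (Fin D))
    (hγ : ContDiff ℝ (⊤ : ℕ∞) γ) (d : ℝ) (hd : 0 ≤ d) (hdR : d ≤ Real.pi * R)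
    (hunit : ∀ t, ‖deriv γ t‖ = 1)
    (hacc : ∀ t ∈ Set.Icc 0 d, ‖deriv (deriv γ) t‖ ≤ 1 / R) :
    d - d ^ 3 / (24 * R ^ 2) + d ^ 5 / (2560 * R ^ 4) ≤ ‖γ d - γ 0‖ := by
  set v := deriv γ (d / 2) with hv
  have hmid : d / 2 ∈ Set.Icc 0 d := by constructor <;> linarith
  have htop : (1 : WithTop ℕ∞) ≤ ((⊤ : ℕ∞) : WithTop ℕ∞) := by exact_mod_cast le_top
  have hγi : ContDiff ℝ ((⊤ : ℕ∞) : WithTop ℕ∞) γ := hγ.of_le (by simp)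
  have hγ' : ContDiff ℝ ((⊤ : ℕ∞) : WithTop ℕ∞) (deriv γ) := (contDiff_infty_iff_deriv.mp hγi).2
  have hgd : ∀ t, HasDerivAt (deriv γ) (deriv (deriv γ) t) t := fun t =>
    ((hγ'.differentiable (by simp)) t).hasDerivAt
  -- Lipschitz bound on deriv γ
  have hlip : ∀ t ∈ Set.Icc 0 d, ‖deriv γ t - v‖ ≤ 1 / R * |t - d / 2| := by
    intro t ht
    have := (convex_Icc (0:ℝ) d).norm_image_sub_le_of_norm_deriv_le
      (f := deriv γ) (fun x _ => (hγ'.differentiable (by simp)).differentiableAt)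
      hacc hmid ht
    simpa [Real.norm_eq_abs, norm_sub_rev, abs_sub_comm] using this
  -- quadratic inner product lower bound
  have hinnerq : ∀ t ∈ Set.Icc 0 d, 1 - ((t - d / 2) / R) ^ 2 / 2 ≤ ⟪deriv γ t, v⟫ := by
    intro t ht
    have h1 : ‖deriv γ t - v‖ ^ 2 = 2 - 2 * ⟪deriv γ t, v⟫ := by
      rw [norm_sub_sq_real, hunit, hunit]; ring
    have h2 : ‖deriv γ t - v‖ ^ 2 ≤ ((t - d / 2) / R) ^ 2 := by
      calc ‖deriv γ t - v‖ ^ 2 ≤ (1 / R * |t - d / 2|) ^ 2 :=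
            pow_le_pow_left₀ (norm_nonneg _) (hlip t ht) 2
        _ = ((t - d / 2) / R) ^ 2 := by rw [mul_pow, sq_abs, div_pow]; ring
    linarith
  -- orthogonality of acceleration and velocity
  have horth : ∀ t, ⟪deriv (deriv γ) t, deriv γ t⟫ = 0 := by
    intro t
    have hDer : HasDerivAt (fun t => ⟪deriv γ t, deriv γ t⟫)
        (⟪deriv γ t, deriv (deriv γ) t⟫ + ⟪deriv (deriv γ) t, deriv γ t⟫) t :=
      (hgd t).inner ℝ (hgd t)
    have hconst : (fun t => ⟪deriv γ t, deriv γ t⟫) = fun _ => (1 : ℝ) := by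
      funext s
      rw [real_inner_self_eq_norm_sq, hunit]; norm_num
    rw [hconst] at hDer
    have h0 := hDer.unique (hasDerivAt_const t 1)
    rw [real_inner_comm] at h0
    linarith
  -- derivative of h(t) = ⟪γ'(t), v⟫
  have hh : ∀ t, HasDerivAt (fun t => ⟪deriv γ t, v⟫) ⟪deriv (deriv γ) t, v⟫ t := by
    intro t
    have := (hgd t).inner ℝ (hasDerivAt_const t v)
    simpa using this
  -- bound on |h'|
  have hder_bound : ∀ t ∈ Set.Icc 0 d,
      |⟪deriv (deriv γ) t, v⟫| ≤ |t - d / 2| / R ^ 2 * (1 - (t - d / 2) ^ 2 / (8 * R ^ 2)) := by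
    intro t ht
    set x := t - d / 2 with hx
    set h := ⟪deriv γ t, v⟫ with hhdef
    set w := v - h • deriv γ t with hw
    have hxd : |x| ≤ d / 2 := by
      rw [abs_le]; constructor <;> [skip; skip] <;> · simp only [hx]; cases' ht with h1 h2; linarith
    have hav : ⟪deriv (deriv γ) t, v⟫ = ⟪deriv (deriv γ) t, w⟫ := by
      rw [hw, inner_sub_right, real_inner_smul_right, horth t]; ring
    have hwsq : ‖w‖ ^ 2 = 1 - h ^ 2 := by
      have hcomm : ⟪v, deriv γ t⟫ = h := by rw [real_inner_comm]
      rw [hw, norm_sub_sq_real, real_inner_smul_right, norm_smul, Real.norm_eq_abs,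
        hunit, hunit, hcomm, mul_one, sq_abs]
      ring
    have hh1 : h ≤ 1 := by
      calc h ≤ |⟪deriv γ t, v⟫| := le_abs_self _
        _ ≤ ‖deriv γ t‖ * ‖v‖ := abs_real_inner_le_norm _ _
        _ = 1 := by rw [hunit, hunit]; ring
    have hc2 : (|x| / R) ^ 2 ≤ Real.pi ^ 2 / 4 := by
      have hpi := Real.pi_pos
      rw [div_pow, sq_abs, div_le_div_iff₀ (by positivity) (by norm_num)]
      nlinarith [mul_self_le_mul_self (abs_nonneg x) hxd, sq_abs x,
        mul_self_le_mul_self hd hdR, sq_nonneg x]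
    have hp : 1 - h ≤ (|x| / R) ^ 2 / 2 := by
      have := hinnerq t ht
      rw [div_pow, sq_abs, ← div_pow]
      linarith
    have hkey := sq_key13 h (|x| / R) hh1 hc2 hp
    have hB : (0 : ℝ) ≤ |x| / R * (1 - (|x| / R) ^ 2 / 8) := by
      apply mul_nonneg (by positivity)
      nlinarith [Real.pi_lt_d2]
    have hwle : ‖w‖ ≤ |x| / R * (1 - (|x| / R) ^ 2 / 8) := by
      nlinarith [norm_nonneg w, hwsq]
    calc |⟪deriv (deriv γ) t, v⟫| = |⟪deriv (deriv γ) t, w⟫| := by rw [hav]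
      _ ≤ ‖deriv (deriv γ) t‖ * ‖w‖ := abs_real_inner_le_norm _ _
      _ ≤ (1 / R) * (|x| / R * (1 - (|x| / R) ^ 2 / 8)) := by
          apply mul_le_mul (hacc t ht) hwle (norm_nonneg _) (by positivity)
      _ = |x| / R ^ 2 * (1 - x ^ 2 / (8 * R ^ 2)) := by
          rw [div_pow, sq_abs]; field_simp
  -- the comparison function φ and its pointwise bound
  set φ : ℝ → ℝ := fun t => 1 - (t - d / 2) ^ 2 / (2 * R ^ 2) + (t - d / 2) ^ 4 / (32 * R ^ 4)
    with hφ
  have hφd : ∀ t, HasDerivAt φ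
      (-(t - d / 2) / R ^ 2 + (t - d / 2) ^ 3 / (8 * R ^ 4)) t := by
    intro t
    have h1 : HasDerivAt (fun t : ℝ => t - d / 2) 1 t := (hasDerivAt_id t).sub_const _
    have h2 : HasDerivAt (fun t : ℝ => (t - d / 2) ^ 2) (2 * (t - d / 2) ^ 1 * 1) t := h1.pow 2
    have h4 : HasDerivAt (fun t : ℝ => (t - d / 2) ^ 4) (4 * (t - d / 2) ^ 3 * 1) t := h1.pow 4
    have := ((hasDerivAt_const t (1:ℝ)).sub (h2.div_const (2 * R ^ 2))).add
      (h4.div_const (32 * R ^ 4))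
    refine this.congr_deriv ?_
    ring
  have hψd : ∀ t, HasDerivAt (fun t => ⟪deriv γ t, v⟫ - φ t)
      (⟪deriv (deriv γ) t, v⟫ - (-(t - d / 2) / R ^ 2 + (t - d / 2) ^ 3 / (8 * R ^ 4))) t :=
    fun t => (hh t).sub (hφd t)
  have hψderiv : ∀ t, deriv (fun t => ⟪deriv γ t, v⟫ - φ t) t
      = ⟪deriv (deriv γ) t, v⟫ - (-(t - d / 2) / R ^ 2 + (t - d / 2) ^ 3 / (8 * R ^ 4)) :=
    fun t => (hψd t).deriv
  have hψcont : Continuous (fun t => ⟪deriv γ t, v⟫ - φ t) :=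
    Differentiable.continuous (fun t => (hψd t).differentiableAt)
  -- pointwise bound  h(t) ≥ φ(t)
  have hpoint : ∀ t ∈ Set.Icc 0 d, φ t ≤ ⟪deriv γ t, v⟫ := by
    intro t ht
    have hψmid : (fun t => ⟪deriv γ t, v⟫ - φ t) (d / 2) = 0 := by
      simp only [hφ]
      have : ⟪deriv γ (d / 2), v⟫ = 1 := by
        rw [hv, real_inner_self_eq_norm_sq, hunit]; norm_num
      rw [this]; ring
    rcases le_or_gt (d / 2) t with hcase | hcase
    · -- monotone on [d/2, d]
      have hmono : MonotoneOn (fun t => ⟪deriv γ t, v⟫ - φ t) (Set.Icc (d / 2) d) := by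
        apply monotoneOn_of_deriv_nonneg (convex_Icc _ _) hψcont.continuousOn
          (fun t _ => ((hψd t).differentiableAt).differentiableWithinAt)
        intro s hs
        rw [interior_Icc] at hs
        have hs' : s ∈ Set.Icc 0 d := ⟨by linarith [hs.1, hmid.1], le_of_lt hs.2⟩
        rw [hψderiv]
        have hb := hder_bound s hs'
        have hxpos : 0 ≤ s - d / 2 := by linarith [hs.1]
        rw [abs_of_nonneg hxpos] at hb
        have hna := neg_abs_le ⟪deriv (deriv γ) s, v⟫
        have hexp2 : (s - d / 2) / R ^ 2 * (1 - (s - d / 2) ^ 2 / (8 * R ^ 2))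
            = (s - d / 2) / R ^ 2 - (s - d / 2) ^ 3 / (8 * R ^ 4) := by
          field_simp
        rw [hexp2] at hb
        have h3 : -(s - d / 2) / R ^ 2 + (s - d / 2) ^ 3 / (8 * R ^ 4)
            ≤ ⟪deriv (deriv γ) s, v⟫ := by
          have he : -(s - d / 2) / R ^ 2 + (s - d / 2) ^ 3 / (8 * R ^ 4)
              = -((s - d / 2) / R ^ 2 - (s - d / 2) ^ 3 / (8 * R ^ 4)) := by ring
          rw [he]
          exact le_trans (neg_le_neg hb) hna
        linarith [h3]
      have h2 := hmono ⟨le_refl _, hmid.2⟩ ⟨hcase, ht.2⟩ hcase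
      rw [hψmid] at h2
      simp only at h2
      linarith [h2]
    · -- antitone on [0, d/2]
      have hanti : AntitoneOn (fun t => ⟪deriv γ t, v⟫ - φ t) (Set.Icc 0 (d / 2)) := by
        apply antitoneOn_of_deriv_nonpos (convex_Icc _ _) hψcont.continuousOn
          (fun t _ => ((hψd t).differentiableAt).differentiableWithinAt)
        intro s hs
        rw [interior_Icc] at hs
        have hs' : s ∈ Set.Icc 0 d := ⟨le_of_lt hs.1, by linarith [hs.2, hmid.2]⟩
        rw [hψderiv]
        have hb := hder_bound s hs'
        have hxneg : s - d / 2 ≤ 0 := by linarith [hs.2]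
        rw [abs_of_nonpos hxneg] at hb
        have hla := le_abs_self ⟪deriv (deriv γ) s, v⟫
        have hexp2 : -(s - d / 2) / R ^ 2 * (1 - (s - d / 2) ^ 2 / (8 * R ^ 2))
            = -((s - d / 2) / R ^ 2) + (s - d / 2) ^ 3 / (8 * R ^ 4) := by
          field_simp; ring
        rw [hexp2] at hb
        have h3 : ⟪deriv (deriv γ) s, v⟫
            ≤ -(s - d / 2) / R ^ 2 + (s - d / 2) ^ 3 / (8 * R ^ 4) := by
          have he : -(s - d / 2) / R ^ 2 + (s - d / 2) ^ 3 / (8 * R ^ 4)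
              = -((s - d / 2) / R ^ 2) + (s - d / 2) ^ 3 / (8 * R ^ 4) := by ring
          rw [he]
          exact le_trans hla hb
        linarith [h3]
      have h2 := hanti ⟨ht.1, le_of_lt hcase⟩ ⟨hmid.1, le_refl _⟩ (le_of_lt hcase)
      rw [hψmid] at h2
      simp only at h2
      linarith [h2]
  -- FTC and integral comparison
  have hint : IntervalIntegrable (deriv γ) MeasureTheory.volume 0 d :=
    (hγ'.continuous).intervalIntegrable 0 d
  have hftc : γ d - γ 0 = ∫ t in (0:ℝ)..d, deriv γ t :=
    (intervalIntegral.integral_deriv_eq_sub (fun t _ =>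
      (hγi.differentiable (by simp)).differentiableAt) hint).symm
  have hiv : ⟪γ d - γ 0, v⟫ = ∫ t in (0:ℝ)..d, ⟪deriv γ t, v⟫ := by
    rw [hftc, real_inner_comm]
    rw [show ⟪v, ∫ t in (0:ℝ)..d, deriv γ t⟫
        = (innerSL ℝ v) (∫ t in (0:ℝ)..d, deriv γ t) from rfl]
    rw [← ContinuousLinearMap.intervalIntegral_comp_comm _ hint]
    simp only [innerSL_apply_apply]
    simp_rw [real_inner_comm]
  have hcontφ : Continuous φ := by
    rw [hφ]; continuity
  have hcont2 : Continuous fun t => ⟪deriv γ t, v⟫ :=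
    Continuous.inner (hγ'.continuous) continuous_const
  have hmono : (∫ t in (0:ℝ)..d, φ t) ≤ ∫ t in (0:ℝ)..d, ⟪deriv γ t, v⟫ :=
    intervalIntegral.integral_mono_on hd (hcontφ.intervalIntegrable 0 d)
      (hcont2.intervalIntegrable 0 d) hpoint
  -- compute ∫ φ
  have hcalc : (∫ t in (0:ℝ)..d, φ t) = d - d ^ 3 / (24 * R ^ 2) + d ^ 5 / (2560 * R ^ 4) := by
    have hF : ∀ t : ℝ, HasDerivAt
        (fun t => t - (t - d / 2) ^ 3 / (6 * R ^ 2) + (t - d / 2) ^ 5 / (160 * R ^ 4)) (φ t) t := by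
      intro t
      have h1 : HasDerivAt (fun t : ℝ => t - d / 2) 1 t := (hasDerivAt_id t).sub_const _
      have h3 : HasDerivAt (fun t : ℝ => (t - d / 2) ^ 3) (3 * (t - d / 2) ^ 2 * 1) t := h1.pow 3
      have h5 : HasDerivAt (fun t : ℝ => (t - d / 2) ^ 5) (5 * (t - d / 2) ^ 4 * 1) t := h1.pow 5
      have := ((hasDerivAt_id t).sub (h3.div_const (6 * R ^ 2))).add
        (h5.div_const (160 * R ^ 4))
      refine this.congr_deriv ?_
      simp only [hφ]; ring
    have hderivF : deriv (fun t => t - (t - d / 2) ^ 3 / (6 * R ^ 2)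
        + (t - d / 2) ^ 5 / (160 * R ^ 4)) = φ := funext fun t => (hF t).deriv
    rw [show (∫ t in (0:ℝ)..d, φ t) = ∫ t in (0:ℝ)..d, deriv (fun t => t
        - (t - d / 2) ^ 3 / (6 * R ^ 2) + (t - d / 2) ^ 5 / (160 * R ^ 4)) t by rw [hderivF]]
    rw [intervalIntegral.integral_deriv_eq_sub (fun t _ => (hF t).differentiableAt)
      (by rw [hderivF]; exact hcontφ.intervalIntegrable 0 d)]
    field_simp
    ring
  have hcs : ⟪γ d - γ 0, v⟫ ≤ ‖γ d - γ 0‖ := by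
    calc ⟪γ d - γ 0, v⟫ ≤ ‖γ d - γ 0‖ * ‖v‖ := real_inner_le_norm _ _
      _ = ‖γ d - γ 0‖ := by rw [hunit]; ring
  linarith [hiv ▸ hcs, hcalc ▸ hmono]

/-- **Quantitative chord–arc comparison below the scale `s(R)`.**
`M ⊂ ℝ^D` is a closed submanifold with `‖II‖_{L∞} ≤ 1/R` and intrinsic distance `dM`
(encoded, as Mathlib has no submanifold/second-fundamental-form theory, by the existence
of smooth unit-speed minimizing geodesics in `M` with Euclidean acceleration `≤ 1/R`).
If `s > 0` is any scale such that `‖x − y‖ < s` implies `dM x y ≤ πR` (so that every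
`s ≤ s(R)` is admissible, and `‖x−y‖ < s(R)` iff `‖x−y‖ < s` for some admissible `s`),
then for all `x, y ∈ M` with `‖x − y‖ < s`:
`‖x − y‖ ≥ (1 − (π²/(96R²))‖x − y‖²)·dM x y`. -/
theorem stmt13 (D : ℕ) (R : ℝ) (hR : 0 < R)
    (M : Set (EuclideanSpace ℝ (Fin D))) (hM : IsCompact M)
    (dM : EuclideanSpace ℝ (Fin D) → EuclideanSpace ℝ (Fin D) → ℝ)
    (hd_nonneg : ∀ x y, 0 ≤ dM x y)
    (hd_ge : ∀ x ∈ M, ∀ y ∈ M, ‖x - y‖ ≤ dM x y)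
    (hgeo : ∀ x ∈ M, ∀ y ∈ M, ∃ γ : ℝ → EuclideanSpace ℝ (Fin D),
      ContDiff ℝ (⊤ : ℕ∞) γ ∧ γ 0 = x ∧ γ (dM x y) = y ∧
      (∀ t ∈ Set.Icc 0 (dM x y), γ t ∈ M) ∧
      (∀ t, ‖deriv γ t‖ = 1) ∧
      (∀ t ∈ Set.Icc 0 (dM x y), ‖deriv (deriv γ) t‖ ≤ 1 / R))
    (s : ℝ) (hs : 0 < s)
    (hsR : ∀ x ∈ M, ∀ y ∈ M, ‖x - y‖ < s → dM x y ≤ Real.pi * R) :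
    ∀ x ∈ M, ∀ y ∈ M, ‖x - y‖ < s →
      (1 - Real.pi ^ 2 / (96 * R ^ 2) * ‖x - y‖ ^ 2) * dM x y ≤ ‖x - y‖ := by
  intro x hx y hy hxy
  obtain ⟨γ, hγ, hγ0, hγd, _, hunit, hacc⟩ := hgeo x hx y hy
  set d := dM x y with hdd
  have hd0 : 0 ≤ d := hd_nonneg x y
  have hdpi : d ≤ Real.pi * R := hsR x hx y hy hxy
  set L := ‖x - y‖ with hL
  have hL0 : 0 ≤ L := norm_nonneg _
  have hquad : d - d ^ 3 / (24 * R ^ 2) + d ^ 5 / (2560 * R ^ 4) ≤ L := by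
    have h := chord_ge13 D R hR γ hγ d hd0 hdpi hunit hacc
    rwa [hγ0, hγd, ← norm_neg, neg_sub, ← hL] at h
  have hpi := Real.pi_pos
  set y' := d ^ 2 / R ^ 2 with hy'
  have hy0 : 0 ≤ y' := by positivity
  have hylt : y' ≤ Real.pi ^ 2 := by
    rw [hy', div_le_iff₀ (by positivity)]
    nlinarith
  have hpk := poly_key13 y' hy0 hylt
  set q : ℝ := 1 - y' / 24 + y' ^ 2 / 2560 with hq
  have hq0 : 0 ≤ q := by
    have h2 : Real.pi < 3.141593 := Real.pi_lt_d6
    have : y' ≤ 9.8697 := by nlinarith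
    rw [hq]; nlinarith [sq_nonneg y']
  have hLm : d * q = d - d ^ 3 / (24 * R ^ 2) + d ^ 5 / (2560 * R ^ 4) := by
    rw [hq, hy']; field_simp
  have hLge : d * q ≤ L := hLm ▸ hquad
  have hLm0 : 0 ≤ d * q := mul_nonneg hd0 hq0
  have hsq : (d * q) ^ 2 ≤ L ^ 2 := pow_le_pow_left₀ hLm0 hLge 2
  have key : d ^ 3 / (24 * R ^ 2) - d ^ 5 / (2560 * R ^ 4)
      ≤ Real.pi ^ 2 / (96 * R ^ 2) * (d * q) ^ 2 * d := by
    have hmul := mul_le_mul_of_nonneg_right hpk (by positivity : (0:ℝ) ≤ d ^ 3 / R ^ 2)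
    calc d ^ 3 / (24 * R ^ 2) - d ^ 5 / (2560 * R ^ 4)
        = (1 / 24 - y' / 2560) * (d ^ 3 / R ^ 2) := by rw [hy']; field_simp
      _ ≤ Real.pi ^ 2 / 96 * q ^ 2 * (d ^ 3 / R ^ 2) := hmul
      _ = Real.pi ^ 2 / (96 * R ^ 2) * (d * q) ^ 2 * d := by field_simp
  have hmono2 : Real.pi ^ 2 / (96 * R ^ 2) * (d * q) ^ 2 * d
      ≤ Real.pi ^ 2 / (96 * R ^ 2) * L ^ 2 * d := by
    apply mul_le_mul_of_nonneg_right _ hd0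
    apply mul_le_mul_of_nonneg_left hsq (by positivity)
  have hexp : (1 - Real.pi ^ 2 / (96 * R ^ 2) * L ^ 2) * d
      = d - Real.pi ^ 2 / (96 * R ^ 2) * L ^ 2 * d := by ring
  linarith [hquad, key, hmono2, hexp]
end

section
/- Define α : D → ℝ on the dyadic rationals D = {k/2ⁿ : n ≥ 0, 0 ≤ k ≤ 2ⁿ} ⊂ [0,1] recursively by α(0) = α(1) = 0, α(1/2) = 1, and for n ≥ 2 and 1 ≤ k ≤ 2^{n−2}: α((4k−3)/2ⁿ) = (θ(n)/4)α(4k/2ⁿ) + ((1−θ(n))/2)α((4k−2)/2ⁿ) + ((2+θ(n))/4)α((4k−4)/2ⁿ), and α((4k−1)/2ⁿ) = (θ(n)/4)α((4k−4)/2ⁿ) + ((1−θ(n))/2)α((4k−2)/2ⁿ) + ((2+θ(n))/4)α(4k/2ⁿ), where θ : ℤ_{≥2} → ℝ_{>0} with ∑ θ(n) < ∞. Let f_n : [0,1] → ℝ be the piecewise-linear interpolation of α on the grid D_n = {k/2ⁿ}. Then for all n ≥ 1: sup_{x∈[0,1]} |f_{n+1}(x) − f_n(x)| = (θ(n+1)/2)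 sup_{x∈[0,1]} |f_n(x) − f_{n−1}(x)|. Consequently f_n converges uniformly on [0,1] to a continuous limit f with f(x) = α(x) for all x ∈ D. -/
/-!
The interpolants `f_n` and `f_{n+1}` agree on `D_n`, so `f_{n+1} - f_n` is a tent function whose
heights are the midpoint defects `d_n(j) = α((2j+1)/2^{n+1}) - (α(j/2ⁿ) + α((j+1)/2ⁿ))/2`, and
`sup |f_{n+1} - f_n| = max_j |d_n(j)|`. The recursion for `α` is exactly what makes
`d_{n+1}(j) = -(θ(n+2)/2) d_n(⌊j/2⌋)`, which gives the ratio of consecutive suprema. Since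
`θ(n) → 0`, these maxima eventually decay geometrically, so the telescoping series
`f_0 + ∑ (f_{n+1} - f_n)` converges uniformly by the M-test; its limit is continuous, and equals
`α` on `D` because `f_m(x) = α(x)` as soon as `x ∈ D_m`.
-/

open Filter Set Topology

noncomputable def dyadicInterp (a : ℕ → ℕ → ℝ) (n : ℕ) (x : ℝ) : ℝ :=
  (1 - ((2 ^ n : ℝ) * x - ⌊(2 ^ n : ℝ) * x⌋)) * a n (⌊(2 ^ n : ℝ) * x⌋.toNat) +
    ((2 ^ n : ℝ) * x - ⌊(2 ^ n : ℝ) * x⌋) * a n (⌊(2 ^ n : ℝ) * x⌋.toNat + 1)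

noncomputable def gridInterp (b : ℕ → ℝ) (y : ℝ) : ℝ :=
  (1 - Int.fract y) * b ⌊y⌋₊ + Int.fract y * b (⌊y⌋₊ + 1)

theorem gridInterp_natCast (b : ℕ → ℝ) (k : ℕ) : gridInterp b k = b k := by
  simp [gridInterp]

theorem gridInterp_of_mem_Icc (b : ℕ → ℝ) {j : ℕ} {y : ℝ} (hy : y ∈ Icc (j : ℝ) (j + 1)) :
    gridInterp b y = (1 - (y - j)) * b j + (y - j) * b (j + 1) := by
  rcases hy.2.lt_or_eq with hlt | rfl
  · have hfloor : ⌊y⌋₊ = j := (Nat.floor_eq_iff (hy.1.trans' j.cast_nonneg)).2 ⟨hy.1, hlt⟩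
    have hfract : Int.fract y = y - j := by
      rw [Int.fract, ← Int.natCast_floor_eq_floor (hy.1.trans' j.cast_nonneg), hfloor]; rfl
    rw [gridInterp, hfloor, hfract]
  · rw [← Nat.cast_succ, gridInterp_natCast]
    push_cast
    ring

theorem continuousOn_gridInterp (b : ℕ → ℝ) (N : ℕ) :
    ContinuousOn (gridInterp b) (Icc 0 N) := by
  have hcover : Icc (0 : ℝ) N ⊆ ⋃ j : Fin (N + 1), Icc (j : ℝ) (j + 1) := fun y hy =>
    mem_iUnion.2 ⟨⟨⌊y⌋₊, Nat.lt_succ_of_le (Nat.floor_le_of_le hy.2)⟩,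
      Nat.floor_le hy.1, (Nat.lt_floor_add_one y).le⟩
  refine ContinuousOn.mono ?_ hcover
  refine (locallyFinite_of_finite _).continuousOn_iUnion (fun _ => isClosed_Icc) fun j => ?_
  refine ContinuousOn.congr (by fun_prop) fun y hy => gridInterp_of_mem_Icc b hy

theorem exists_nat_lt_mem_Icc {N : ℕ} (hN : 0 < N) {y : ℝ} (hy : y ∈ Icc (0 : ℝ) N) :
    ∃ j < N, y ∈ Icc (j : ℝ) (j + 1) := by
  rcases hy.2.lt_or_eq with hlt | rfl
  · exact ⟨⌊y⌋₊, (Nat.floor_lt hy.1).2 hlt, Nat.floor_le hy.1, (Nat.lt_floor_add_one y).le⟩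
  · obtain ⟨M, rfl⟩ := Nat.exists_eq_add_one_of_ne_zero hN.ne'
    exact ⟨M, M.lt_add_one, by push_cast; linarith, by push_cast; rfl⟩

theorem tendstoUniformlyOn_of_norm_sub_le_summable {β F : Type*} [NormedAddCommGroup F]
    [CompleteSpace F] {f : ℕ → β → F} {M : ℕ → ℝ} {s : Set β} (hM : Summable M)
    (hf : ∀ n, ∀ x ∈ s, ‖f (n + 1) x - f n x‖ ≤ M n) :
    TendstoUniformlyOn f (fun x => f 0 x + ∑' n, (f (n + 1) x - f n x)) atTop s := by
  have hsum := tendstoUniformlyOn_tsum_nat hM hf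
  have htel : ∀ N x, f N x = f 0 x + ∑ n ∈ Finset.range N, (f (n + 1) x - f n x) := fun N x => by
    rw [Finset.sum_range_sub (fun n => f n x), add_sub_cancel]
  rw [Metric.tendstoUniformlyOn_iff] at hsum ⊢
  intro ε hε
  filter_upwards [hsum ε hε] with N hN x hx
  rw [htel N x, dist_add_left]
  exact hN x hx

theorem summable_of_succ_eq_mul_of_tendsto_zero {M c : ℕ → ℝ} (hM : ∀ n, M (n + 1) = c n * M n)
    (hc : Tendsto c atTop (𝓝 0)) : Summable M := by
  refine summable_of_ratio_norm_eventually_le (r := 1 / 2) (by norm_num) ?_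
  filter_upwards [(hc.norm.eventually_le_const (by norm_num : ‖(0:ℝ)‖ < 1 / 2))] with n hn
  rw [hM, norm_mul]
  exact mul_le_mul_of_nonneg_right hn (norm_nonneg _)

theorem two_pow_mul_mem_Icc (n : ℕ) {x : ℝ} (hx : x ∈ Icc (0 : ℝ) 1) :
    2 ^ n * x ∈ Icc (0 : ℝ) (2 ^ n : ℕ) :=
  ⟨mul_nonneg (by positivity) hx.1, by push_cast; exact mul_le_of_le_one_right (by positivity) hx.2⟩

section MidpointDefect

variable (a : ℕ → ℕ → ℝ)

noncomputable def midpointDefect (n j : ℕ) : ℝ :=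
  a (n + 1) (2 * j + 1) - (a n j + a n (j + 1)) / 2

noncomputable def maxMidpointDefect (n : ℕ) : ℝ :=
  (Finset.range (2 ^ n)).sup' (Finset.nonempty_range_iff.2 (by positivity))
    fun j => |midpointDefect a n j|

variable {a}

theorem midpointDefect_succ {θ : ℕ → ℝ} (hcons : ∀ n k, a (n + 1) (2 * k) = a n k)
    (hrec1 : ∀ m k, 1 ≤ k → k ≤ 2 ^ m →
      a (m + 2) (4 * k - 3) =
        θ (m + 2) / 4 * a (m + 2) (4 * k) + (1 - θ (m + 2)) / 2 * a (m + 2) (4 * k - 2) +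
          (2 + θ (m + 2)) / 4 * a (m + 2) (4 * k - 4))
    (hrec2 : ∀ m k, 1 ≤ k → k ≤ 2 ^ m →
      a (m + 2) (4 * k - 1) =
        θ (m + 2) / 4 * a (m + 2) (4 * k - 4) + (1 - θ (m + 2)) / 2 * a (m + 2) (4 * k - 2) +
          (2 + θ (m + 2)) / 4 * a (m + 2) (4 * k))
    (m : ℕ) {j : ℕ} (hj : j < 2 ^ (m + 1)) :
    midpointDefect a (m + 1) j = -(θ (m + 2) / 2) * midpointDefect a m (j / 2) := by
  have h4 : ∀ i, a (m + 2) (4 * i) = a m i := fun i => by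
    rw [show 4 * i = 2 * (2 * i) by ring, hcons, hcons]
  have h42 : ∀ i, a (m + 2) (4 * i + 2) = a (m + 1) (2 * i + 1) := fun i => by
    rw [show 4 * i + 2 = 2 * (2 * i + 1) by ring, hcons]
  have hpow : 2 ^ (m + 1) = 2 * 2 ^ m := by ring
  obtain ⟨i, rfl | rfl⟩ := Nat.even_or_odd' j
  · have h := hrec1 m (i + 1) (by omega) (by omega)
    rw [show 4 * (i + 1) - 3 = 4 * i + 1 by omega, show 4 * (i + 1) - 2 = 4 * i + 2 by omega,
      show 4 * (i + 1) - 4 = 4 * i by omega, h4, h4, h42] at h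
    rw [midpointDefect, midpointDefect, show 2 * (2 * i) + 1 = 4 * i + 1 by ring, h, hcons,
      show 2 * i / 2 = i by omega]
    ring
  · have h := hrec2 m (i + 1) (by omega) (by omega)
    rw [show 4 * (i + 1) - 1 = 4 * i + 3 by omega, show 4 * (i + 1) - 2 = 4 * i + 2 by omega,
      show 4 * (i + 1) - 4 = 4 * i by omega, h4, h4, h42] at h
    rw [midpointDefect, midpointDefect, show 2 * (2 * i + 1) + 1 = 4 * i + 3 by ring, h,
      show 2 * i + 1 + 1 = 2 * (i + 1) by ring, hcons, show (2 * i + 1) / 2 = i by omega]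
    ring

theorem maxMidpointDefect_succ {m : ℕ} {c : ℝ}
    (h : ∀ j < 2 ^ (m + 1), midpointDefect a (m + 1) j = c * midpointDefect a m (j / 2)) :
    maxMidpointDefect a (m + 1) = |c| * maxMidpointDefect a m := by
  have himage : (Finset.range (2 ^ (m + 1))).image (· / 2) = Finset.range (2 ^ m) := by
    ext i
    simp only [Finset.mem_image, Finset.mem_range]
    have hpow : 2 ^ (m + 1) = 2 * 2 ^ m := by ring
    exact ⟨by rintro ⟨j, hj, rfl⟩; omega, fun hi => ⟨2 * i, by omega, by omega⟩⟩
  rw [maxMidpointDefect, maxMidpointDefect, Finset.mul₀_sup' (abs_nonneg c)]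
  calc _ = (Finset.range (2 ^ (m + 1))).sup' _
        ((fun i => |c| * |midpointDefect a m i|) ∘ (· / 2)) :=
      Finset.sup'_congr _ rfl fun j hj => by
        rw [Function.comp_apply, h j (Finset.mem_range.1 hj), abs_mul]
    _ = _ := Finset.sup'_comp_eq_image _ _
    _ = _ := Finset.sup'_congr _ himage fun _ _ => rfl

end MidpointDefect

namespace dyadicInterp

variable (a : ℕ → ℕ → ℝ)

theorem eq_gridInterp (n : ℕ) (x : ℝ) : dyadicInterp a n x = gridInterp (a n) (2 ^ n * x) := by
  simp only [dyadicInterp, gridInterp, Int.self_sub_floor, Int.floor_toNat]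

theorem apply_natCast_div (n k : ℕ) : dyadicInterp a n (k / 2 ^ n) = a n k := by
  rw [eq_gridInterp, mul_div_cancel₀ _ (by positivity), gridInterp_natCast]

theorem continuousOn (n : ℕ) : ContinuousOn (dyadicInterp a n) (Icc 0 1) := by
  rw [funext (eq_gridInterp a n)]
  exact (continuousOn_gridInterp (a n) _).comp (by fun_prop) fun _ hx => two_pow_mul_mem_Icc n hx

variable {a}

theorem succ_sub_eq_mul_midpointDefect (hcons : ∀ n k, a (n + 1) (2 * k) = a n k) (n : ℕ)
    {x : ℝ} (hx : x ∈ Icc 0 1) : ∃ j < 2 ^ n, ∃ c ∈ Icc (0 : ℝ) 1,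
      dyadicInterp a (n + 1) x - dyadicInterp a n x = c * midpointDefect a n j := by
  set y := 2 ^ n * x with hy
  obtain ⟨j, hj, hyj⟩ := exists_nat_lt_mem_Icc (by positivity) (two_pow_mul_mem_Icc n hx)
  have h2y : 2 ^ (n + 1) * x = 2 * y := by ring
  rw [eq_gridInterp, eq_gridInterp, h2y, gridInterp_of_mem_Icc _ hyj]
  rcases le_total y (j + 1 / 2) with h | h
  · have h2yj : 2 * y ∈ Icc ((2 * j : ℕ) : ℝ) ((2 * j : ℕ) + 1) := by
      push_cast; constructor <;> linarith [hyj.1]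
    refine ⟨j, hj, 2 * (y - j), ⟨by linarith [hyj.1], by linarith⟩, ?_⟩
    rw [gridInterp_of_mem_Icc _ h2yj, hcons, midpointDefect]
    push_cast; ring
  · have h2yj : 2 * y ∈ Icc ((2 * j + 1 : ℕ) : ℝ) ((2 * j + 1 : ℕ) + 1) := by
      push_cast; constructor <;> linarith [hyj.2]
    refine ⟨j, hj, 2 * (j + 1 - y), ⟨by linarith [hyj.2], by linarith⟩, ?_⟩
    rw [gridInterp_of_mem_Icc _ h2yj, show 2 * j + 1 + 1 = 2 * (j + 1) by ring, hcons,
      midpointDefect]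
    push_cast; ring

theorem succ_sub_apply_midpoint (n j : ℕ) :
    dyadicInterp a (n + 1) ((2 * j + 1) / 2 ^ (n + 1)) -
      dyadicInterp a n ((2 * j + 1) / 2 ^ (n + 1)) = midpointDefect a n j := by
  have hmid : 2 ^ n * ((2 * j + 1) / 2 ^ (n + 1) : ℝ) = j + 1 / 2 := by
    field_simp; ring
  have hmem : (j + 1 / 2 : ℝ) ∈ Icc (j : ℝ) (j + 1) := ⟨by linarith, by linarith⟩
  rw [eq_gridInterp a n, hmid, gridInterp_of_mem_Icc _ hmem,
    show (2 * j + 1 : ℝ) = (2 * j + 1 : ℕ) by push_cast; ring, apply_natCast_div, midpointDefect]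
  ring

theorem abs_succ_sub_le (hcons : ∀ n k, a (n + 1) (2 * k) = a n k) (n : ℕ)
    {x : ℝ} (hx : x ∈ Icc 0 1) :
    |dyadicInterp a (n + 1) x - dyadicInterp a n x| ≤ maxMidpointDefect a n := by
  obtain ⟨j, hj, c, hc, heq⟩ := succ_sub_eq_mul_midpointDefect hcons n hx
  calc |dyadicInterp a (n + 1) x - dyadicInterp a n x| = c * |midpointDefect a n j| := by
        rw [heq, abs_mul, abs_of_nonneg hc.1]
    _ ≤ |midpointDefect a n j| := mul_le_of_le_one_left (abs_nonneg _) hc.2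
    _ ≤ maxMidpointDefect a n := Finset.le_sup' (fun j => |midpointDefect a n j|)
        (Finset.mem_range.2 hj)

theorem iSup_abs_succ_sub (hcons : ∀ n k, a (n + 1) (2 * k) = a n k) (n : ℕ) :
    ⨆ x : Icc (0 : ℝ) 1, |dyadicInterp a (n + 1) x - dyadicInterp a n x| =
      maxMidpointDefect a n := by
  refine le_antisymm (ciSup_le fun x => abs_succ_sub_le hcons n x.2) ?_
  refine Finset.sup'_le _ _ fun j hj => ?_
  have hmem : ((2 * j + 1) / 2 ^ (n + 1) : ℝ) ∈ Icc (0 : ℝ) 1 := by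
    have : (j + 1 : ℝ) ≤ 2 ^ n := by exact_mod_cast Finset.mem_range.1 hj
    refine ⟨by positivity, (div_le_one (by positivity)).2 ?_⟩
    rw [pow_succ]; linarith
  rw [← succ_sub_apply_midpoint]
  exact le_ciSup (f := fun x : Icc (0 : ℝ) 1 => |dyadicInterp a (n + 1) x - dyadicInterp a n x|)
    ⟨maxMidpointDefect a n, by rintro _ ⟨x, rfl⟩; exact abs_succ_sub_le hcons n x.2⟩ ⟨_, hmem⟩

theorem apply_natCast_div_of_le (hcons : ∀ n k, a (n + 1) (2 * k) = a n k) {n m : ℕ}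
    (h : n ≤ m) (k : ℕ) : dyadicInterp a m (k / 2 ^ n) = a n k := by
  obtain ⟨i, rfl⟩ := Nat.exists_eq_add_of_le h
  have hk : (k / 2 ^ n : ℝ) = ((2 ^ i * k : ℕ) : ℝ) / 2 ^ (n + i) := by
    push_cast; rw [pow_add]; field_simp
  rw [hk, apply_natCast_div]
  clear h hk
  induction i with
  | zero => simp
  | succ i ih => rw [← add_assoc, pow_succ', mul_assoc, hcons, ih]

end dyadicInterp

open dyadicInterp

theorem stmt17_general (θ : ℕ → ℝ) (hθpos : ∀ n, 2 ≤ n → 0 < θ n) (hθsum : Summable θ)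
    (a : ℕ → ℕ → ℝ)
    (hcons : ∀ n k, a (n + 1) (2 * k) = a n k)
    (hrec1 : ∀ m k, 1 ≤ k → k ≤ 2 ^ m →
      a (m + 2) (4 * k - 3) =
        θ (m + 2) / 4 * a (m + 2) (4 * k) + (1 - θ (m + 2)) / 2 * a (m + 2) (4 * k - 2) +
          (2 + θ (m + 2)) / 4 * a (m + 2) (4 * k - 4))
    (hrec2 : ∀ m k, 1 ≤ k → k ≤ 2 ^ m →
      a (m + 2) (4 * k - 1) =
        θ (m + 2) / 4 * a (m + 2) (4 * k - 4) + (1 - θ (m + 2)) / 2 * a (m + 2) (4 * k - 2) +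
          (2 + θ (m + 2)) / 4 * a (m + 2) (4 * k)) :
    (∀ n, 1 ≤ n →
      (⨆ x : Set.Icc (0:ℝ) 1, |dyadicInterp a (n + 1) x - dyadicInterp a n x|) =
        θ (n + 1) / 2 *
          ⨆ x : Set.Icc (0:ℝ) 1, |dyadicInterp a n x - dyadicInterp a (n - 1) x|) ∧
    ∃ f : ℝ → ℝ, ContinuousOn f (Set.Icc 0 1) ∧
      TendstoUniformlyOn (fun n => dyadicInterp a n) f atTop (Set.Icc 0 1) ∧
      ∀ n k : ℕ, k ≤ 2 ^ n → f ((k : ℝ) / 2 ^ n) = a n k := by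
  have hmax : ∀ m, maxMidpointDefect a (m + 1) = θ (m + 2) / 2 * maxMidpointDefect a m :=
    fun m => by
      rw [maxMidpointDefect_succ fun j hj => midpointDefect_succ hcons hrec1 hrec2 m hj, abs_neg,
        abs_of_pos (half_pos (hθpos (m + 2) (by omega)))]
  have hratio : Tendsto (fun m => θ (m + 2) / 2) atTop (𝓝 0) := by
    simpa using ((tendsto_add_atTop_iff_nat 2).2 hθsum.tendsto_atTop_zero).div_const 2
  have hsummable := summable_of_succ_eq_mul_of_tendsto_zero hmax hratio
  have hlim := tendstoUniformlyOn_of_norm_sub_le_summable hsummable fun n x hx =>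
    (Real.norm_eq_abs _).trans_le (abs_succ_sub_le hcons n hx)
  refine ⟨fun n hn => ?_, _, hlim.continuousOn (Frequently.of_forall (continuousOn a)), hlim,
    fun n k hk => ?_⟩
  · obtain ⟨m, rfl⟩ := Nat.exists_eq_add_of_le' hn
    rw [Nat.add_sub_cancel, iSup_abs_succ_sub hcons, iSup_abs_succ_sub hcons, hmax]
  · have hmem : (k / 2 ^ n : ℝ) ∈ Icc 0 1 :=
      ⟨by positivity, (div_le_one (by positivity)).2 (by exact_mod_cast hk)⟩
    refine tendsto_nhds_unique (hlim.tendsto_at hmem) (tendsto_const_nhds.congr' ?_)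
    filter_upwards [eventually_ge_atTop n] with m hm
    exact (apply_natCast_div_of_le hcons hm k).symm

/-- **Uniform convergence of the dense-singularity construction.**
`a n k` encodes `α(k/2ⁿ)`, defined recursively from `α(0) = α(1) = 0`, `α(1/2) = 1` by the
weighted-average recursion with weights `θ(n)` (`θ(n) > 0` for `n ≥ 2`, `∑θ(n) < ∞`);
`hcons` expresses well-definedness across dyadic levels.  Then for `n ≥ 1` the successive
sup-differences of the interpolants satisfy
`sup |f_{n+1} − f_n| = (θ(n+1)/2)·sup |f_n − f_{n−1}|`, and the `f_n` converge uniformly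
on `[0,1]` to a continuous limit `f` with `f(k/2ⁿ) = α(k/2ⁿ)`. -/
theorem stmt17 (θ : ℕ → ℝ) (hθpos : ∀ n, 2 ≤ n → 0 < θ n) (hθsum : Summable θ)
    (a : ℕ → ℕ → ℝ)
    (hbase0 : a 0 0 = 0) (hbase1 : a 0 1 = 0) (hhalf : a 1 1 = 1)
    (hcons : ∀ n k, a (n + 1) (2 * k) = a n k)
    (hrec1 : ∀ m k, 1 ≤ k → k ≤ 2 ^ m →
      a (m + 2) (4 * k - 3) =
        θ (m + 2) / 4 * a (m + 2) (4 * k) + (1 - θ (m + 2)) / 2 * a (m + 2) (4 * k - 2) +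
          (2 + θ (m + 2)) / 4 * a (m + 2) (4 * k - 4))
    (hrec2 : ∀ m k, 1 ≤ k → k ≤ 2 ^ m →
      a (m + 2) (4 * k - 1) =
        θ (m + 2) / 4 * a (m + 2) (4 * k - 4) + (1 - θ (m + 2)) / 2 * a (m + 2) (4 * k - 2) +
          (2 + θ (m + 2)) / 4 * a (m + 2) (4 * k)) :
    (∀ n, 1 ≤ n →
      (⨆ x : Set.Icc (0:ℝ) 1, |dyadicInterp a (n + 1) x - dyadicInterp a n x|) =
        θ (n + 1) / 2 *
          ⨆ x : Set.Icc (0:ℝ) 1, |dyadicInterp a n x - dyadicInterp a (n - 1) x|) ∧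
    ∃ f : ℝ → ℝ, ContinuousOn f (Set.Icc 0 1) ∧
      TendstoUniformlyOn (fun n => dyadicInterp a n) f atTop (Set.Icc 0 1) ∧
      ∀ n k : ℕ, k ≤ 2 ^ n → f ((k : ℝ) / 2 ^ n) = a n k :=
  stmt17_general θ hθpos hθsum a hcons hrec1 hrec2
end
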